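/- arXiv:2510.22744 — 9 statements merged into one kernel-verified Lean document; each statement's English description precedes it below -/
import Mathlib

section
/- Let (Ω, 𝒜, P) be a probability space with filtration (ℱ_t)_{t≥0}, let (Δ_t)_{t≥1} and (Δ'_t)_{t≥1} be square-integrable real random variables with Δ_t and Δ'_t ℱ_t-measurable and E[Δ_t | ℱ_{t−1}] = 0, E[Δ'_t | ℱ_{t−1}] = 0 almost surely. Fix b > 0, a nonnegative sequence (σ_t)_{t≥2}, and (γ_t)_{t≥2} in [0,1), and define Γ_1 = 1, Γ_t = ∏_{i=2}^{t}(1−γ_i), M_1 = Δ_1, M_t = Δ_t − (1−γ_t)·Δ'_t + (1−γ_t)·M_{t−1} for t ≥ 2, and the variance recursion V_1 = b², V_t = (γ_t·b + (1−γ_t)·σ_t)² + (1−γ_t)²·V_{t−1} for t ≥ 2. Assume Var(Δ_t | ℱ_{t−1}) ≤ b² almost surely for all t ≥ 1 and Var(Δ_t − Δ'_t | ℱ_{t−1}) ≤ σ_t² almost surely for all t ≥ 2. Then for all t ≥ 1: (1) Var(M_t) ≤ V_t, and (2) Γ_t² · Σ_{i=1}^{t} Var(M_i/Γ_i − M_{i−1}/Γ_{i−1}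 | ℱ_{i−1}) ≤ V_t almost surely, where M_0/Γ_0 := 0. -/
/-!
Put `X_t = Δ_t - (1 - γ_t) Δ'_t = γ_t Δ_t + (1 - γ_t)(Δ_t - Δ'_t)`, a martingale difference,
so that `M_t = X_t + (1 - γ_t) M_{t-1}` and, since `Γ_t = (1 - γ_t) Γ_{t-1}`,
`M_t / Γ_t - M_{t-1} / Γ_{t-1} = X_t / Γ_t`. A conditional Minkowski inequality bounds
`E[X_t² | ℱ_{t-1}]` by `(γ_t b + (1 - γ_t) σ_t)²`. As `X_t` is orthogonal to the
`ℱ_{t-1}`-measurable `M_{t-1}`, `E[M_t²] = E[X_t²] + (1 - γ_t)² E[M_{t-1}²]`, and the scaled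
sum in (2) obeys the same recursion pathwise; in both cases the recursion defining `V_t`
dominates.
-/

open MeasureTheory ProbabilityTheory Filter

/-- Conditional variance of `X` given the σ-algebra `m`:
`Var(X | m) = E[(X - E[X|m])² | m]`. -/
noncomputable def condVar {Ω : Type*} {m0 : MeasurableSpace Ω}
    (μ : Measure Ω) (m : MeasurableSpace Ω) (X : Ω → ℝ) : Ω → ℝ :=
  μ[fun ω => (X ω - (μ[X|m]) ω) ^ 2 | m]

open Topology

section ConditionalMoments

variable {Ω : Type*} {m m0 : MeasurableSpace Ω} {μ : Measure Ω}

lemma condVar_ae_eq_condExp_sq {X : Ω → ℝ} (h : μ[X|m] =ᵐ[μ] 0) :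
    condVar μ m X =ᵐ[μ] μ[fun ω => X ω ^ 2 | m] :=
  condExp_congr_ae (h.mono fun ω hω => by simp [hω])

lemma condExp_sub_mul_ae_eq_zero {X Y : Ω → ℝ} (hX : Integrable X μ) (hY : Integrable Y μ)
    (hXc : μ[X|m] =ᵐ[μ] 0) (hYc : μ[Y|m] =ᵐ[μ] 0) (c : ℝ) :
    μ[fun ω => X ω - c * Y ω | m] =ᵐ[μ] 0 := by
  change μ[X - c • Y | m] =ᵐ[μ] 0
  filter_upwards [condExp_sub hX (hY.smul c) m, condExp_smul c Y m, hXc, hYc] with ω h hs h1 h2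
  simp [h, hs, h1, h2]

-- The `condVar` above is definitionally Mathlib's `ProbabilityTheory.condVar`.
lemma sq_mul_condVar_inv_mul {g : ℝ} (hg : g ≠ 0) (X : Ω → ℝ) :
    ∀ᵐ ω ∂μ, g ^ 2 * condVar μ m (fun ω => g⁻¹ * X ω) ω = condVar μ m X ω := by
  filter_upwards [ProbabilityTheory.condVar_smul (μ := μ) (m := m) g⁻¹ X] with ω h
  change g ^ 2 * Var[g⁻¹ • X; μ | m] ω = Var[X; μ | m] ω
  rw [h, Pi.smul_apply, smul_eq_mul, ← mul_assoc, ← mul_pow, mul_inv_cancel₀ hg, one_pow, one_mul]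

lemma integral_le_of_condExp_le [IsProbabilityMeasure μ] (hm : m ≤ m0) {f : Ω → ℝ} {C : ℝ}
    (h : μ[f|m] ≤ᵐ[μ] fun _ => C) :
    ∫ ω, f ω ∂μ ≤ C := by
  rw [← integral_condExp hm]
  simpa using integral_mono_ae integrable_condExp (integrable_const C) h

lemma integral_mul_eq_zero_of_condExp_eq_zero [IsFiniteMeasure μ] (hm : m ≤ m0) {X Y : Ω → ℝ}
    (hY : StronglyMeasurable[m] Y) (hYL2 : MemLp Y 2 μ) (hXL2 : MemLp X 2 μ)
    (hX : μ[X|m] =ᵐ[μ] 0) :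
    ∫ ω, Y ω * X ω ∂μ = 0 := by
  rw [← integral_condExp hm]
  refine integral_eq_zero_of_ae ((condExp_mul_of_stronglyMeasurable_left hY
    (hYL2.integrable_mul hXL2) (hXL2.integrable one_le_two)).trans ?_)
  filter_upwards [hX] with ω hω
  simp [hω]

lemma integral_sq_add_mul_eq [IsFiniteMeasure μ] (hm : m ≤ m0) {X Y : Ω → ℝ}
    (hY : StronglyMeasurable[m] Y) (hYL2 : MemLp Y 2 μ) (hXL2 : MemLp X 2 μ)
    (hX : μ[X|m] =ᵐ[μ] 0) (c : ℝ) :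
    ∫ ω, (X ω + c * Y ω) ^ 2 ∂μ = ∫ ω, X ω ^ 2 ∂μ + c ^ 2 * ∫ ω, Y ω ^ 2 ∂μ := by
  have hYX : Integrable (fun ω => Y ω * X ω) μ := hYL2.integrable_mul hXL2
  have hX2 : Integrable (fun ω => X ω ^ 2 + 2 * c * (Y ω * X ω)) μ :=
    hXL2.integrable_sq.add (hYX.const_mul _)
  calc ∫ ω, (X ω + c * Y ω) ^ 2 ∂μ
      = ∫ ω, (X ω ^ 2 + 2 * c * (Y ω * X ω) + c ^ 2 * Y ω ^ 2) ∂μ := by congr 1; ext ω; ring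
    _ = ∫ ω, X ω ^ 2 ∂μ + 2 * c * ∫ ω, Y ω * X ω ∂μ + c ^ 2 * ∫ ω, Y ω ^ 2 ∂μ := by
      rw [integral_add hX2 (hYL2.integrable_sq.const_mul _),
        integral_add hXL2.integrable_sq (hYX.const_mul _), integral_const_mul, integral_const_mul]
    _ = ∫ ω, X ω ^ 2 ∂μ + c ^ 2 * ∫ ω, Y ω ^ 2 ∂μ := by
      rw [integral_mul_eq_zero_of_condExp_eq_zero hm hY hYL2 hXL2 hX]; ring

end ConditionalMoments

section ConditionalMinkowski

variable {Ω : Type*} {m m0 : MeasurableSpace Ω} {μ : Measure Ω}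

lemma sq_add_le_mul_add_div {α β a c : ℝ} (hα : 0 ≤ α) (hβ : 0 ≤ β) (ha : 0 < a) (hc : 0 < c)
    (x y : ℝ) :
    (α * x + β * y) ^ 2 ≤ (α * a + β * c) * (α / a * x ^ 2 + β / c * y ^ 2) := by
  have key : (α * a + β * c) * (α / a * x ^ 2 + β / c * y ^ 2)
      = (α * x + β * y) ^ 2 + α * β * (c * x - a * y) ^ 2 / (a * c) := by
    field_simp; ring
  rw [key]
  exact le_add_of_nonneg_right (by positivity)

lemma condExp_sq_add_le_of_pos {X Y : Ω → ℝ} (hX : MemLp X 2 μ) (hY : MemLp Y 2 μ)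
    {α β a c : ℝ} (hα : 0 ≤ α) (hβ : 0 ≤ β) (ha : 0 < a) (hc : 0 < c)
    (hXa : μ[fun ω => X ω ^ 2 | m] ≤ᵐ[μ] fun _ => a ^ 2)
    (hYc : μ[fun ω => Y ω ^ 2 | m] ≤ᵐ[μ] fun _ => c ^ 2) :
    μ[fun ω => (α * X ω + β * Y ω) ^ 2 | m] ≤ᵐ[μ] fun _ => (α * a + β * c) ^ 2 := by
  set w := α * a + β * c
  have hX2 := hX.integrable_sq
  have hY2 := hY.integrable_sq
  have hmono : μ[fun ω => (α * X ω + β * Y ω) ^ 2 | m]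
      ≤ᵐ[μ] μ[w • ((α / a) • (fun ω => X ω ^ 2) + (β / c) • fun ω => Y ω ^ 2) | m] :=
    condExp_mono ((hX.const_mul α).add (hY.const_mul β)).integrable_sq
      (((hX2.smul _).add (hY2.smul _)).smul _)
      (ae_of_all _ fun ω => sq_add_le_mul_add_div hα hβ ha hc (X ω) (Y ω))
  filter_upwards [hmono,
    condExp_smul (m := m) w ((α / a) • (fun ω => X ω ^ 2) + (β / c) • fun ω => Y ω ^ 2),
    condExp_add (m := m) (hX2.smul (α / a)) (hY2.smul (β / c)),
    condExp_smul (m := m) (α / a) (fun ω => X ω ^ 2),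
    condExp_smul (m := m) (β / c) (fun ω => Y ω ^ 2), hXa, hYc] with ω hω hw hadd hXs hYs hXω hYω
  simp only [Pi.smul_apply, Pi.add_apply, smul_eq_mul] at hw hadd hXs hYs
  have hw0 : 0 ≤ w := by positivity
  calc _ ≤ _ := hω
    _ = w * (α / a * (μ[fun ω => X ω ^ 2 | m]) ω + β / c * (μ[fun ω => Y ω ^ 2 | m]) ω) := by
      rw [hw, hadd, hXs, hYs]
    _ ≤ w * (α / a * a ^ 2 + β / c * c ^ 2) := by gcongr
    _ = w ^ 2 := by field_simp; ring

-- The weights `α / a`, `β / c` of the previous lemma need `a, c > 0`: perturb both by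
-- `1 / (n + 1)` and let `n → ∞`.
lemma condExp_sq_add_le {X Y : Ω → ℝ} (hX : MemLp X 2 μ) (hY : MemLp Y 2 μ)
    {α β a c : ℝ} (hα : 0 ≤ α) (hβ : 0 ≤ β) (ha : 0 ≤ a) (hc : 0 ≤ c)
    (hXa : μ[fun ω => X ω ^ 2 | m] ≤ᵐ[μ] fun _ => a ^ 2)
    (hYc : μ[fun ω => Y ω ^ 2 | m] ≤ᵐ[μ] fun _ => c ^ 2) :
    μ[fun ω => (α * X ω + β * Y ω) ^ 2 | m] ≤ᵐ[μ] fun _ => (α * a + β * c) ^ 2 := by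
  set ε : ℕ → ℝ := fun n => 1 / ((n : ℝ) + 1)
  have hε : ∀ n, 0 < ε n := fun n => by positivity
  have hle_sq {u : ℝ} (hu : 0 ≤ u) (n : ℕ) : u ^ 2 ≤ (u + ε n) ^ 2 := by
    gcongr; linarith [hε n]
  have hperturbed : ∀ n, μ[fun ω => (α * X ω + β * Y ω) ^ 2 | m]
      ≤ᵐ[μ] fun _ => (α * (a + ε n) + β * (c + ε n)) ^ 2 := fun n =>
    condExp_sq_add_le_of_pos hX hY hα hβ (by linarith [hε n]) (by linarith [hε n])
      (hXa.mono fun ω h => h.trans (hle_sq ha n)) (hYc.mono fun ω h => h.trans (hle_sq hc n))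
  have hlim : Tendsto (fun n => (α * (a + ε n) + β * (c + ε n)) ^ 2) atTop
      (𝓝 ((α * (a + 0) + β * (c + 0)) ^ 2)) :=
    (((tendsto_one_div_add_atTop_nhds_zero_nat.const_add a).const_mul α).add
      ((tendsto_one_div_add_atTop_nhds_zero_nat.const_add c).const_mul β)).pow 2
  filter_upwards [ae_all_iff.2 hperturbed] with ω hω
  simpa only [add_zero] using ge_of_tendsto' hlim hω

lemma condExp_sq_sub_mul_le [IsFiniteMeasure μ] {D D' : Ω → ℝ} (hD : MemLp D 2 μ)
    (hD' : MemLp D' 2 μ) (hDc : μ[D|m] =ᵐ[μ] 0) (hD'c : μ[D'|m] =ᵐ[μ] 0) {g b s : ℝ}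
    (hg0 : 0 ≤ g) (hg1 : g ≤ 1) (hb : 0 ≤ b) (hs : 0 ≤ s) (hDvar : ∀ᵐ ω ∂μ, condVar μ m D ω ≤ b ^ 2)
    (hdiffvar : ∀ᵐ ω ∂μ, condVar μ m (fun ω => D ω - D' ω) ω ≤ s ^ 2) :
    μ[fun ω => (D ω - (1 - g) * D' ω) ^ 2 | m] ≤ᵐ[μ] fun _ => (g * b + (1 - g) * s) ^ 2 := by
  have hdiffc : μ[fun ω => D ω - D' ω | m] =ᵐ[μ] 0 := by
    simpa using condExp_sub_mul_ae_eq_zero (hD.integrable one_le_two)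
      (hD'.integrable one_le_two) hDc hD'c 1
  have hsplit : (fun ω => (D ω - (1 - g) * D' ω) ^ 2)
      = fun ω => (g * D ω + (1 - g) * (D ω - D' ω)) ^ 2 := by
    funext ω; ring
  rw [hsplit]
  exact condExp_sq_add_le hD (hD.sub hD') hg0 (sub_nonneg.2 hg1) hb hs
    ((condVar_ae_eq_condExp_sq hDc).symm.trans_le hDvar)
    ((condVar_ae_eq_condExp_sq hdiffc).symm.trans_le hdiffvar)

end ConditionalMinkowski

lemma le_of_damped_recursion {e V v c : ℕ → ℝ} (h1 : e 1 ≤ V 1)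
    (he : ∀ t ≥ 2, e t ≤ v t + c t ^ 2 * e (t - 1))
    (hV : ∀ t ≥ 2, V t = v t + c t ^ 2 * V (t - 1)) :
    ∀ t ≥ 1, e t ≤ V t := by
  intro t ht
  induction t, ht using Nat.le_induction with
  | base => exact h1
  | succ n hn ih =>
    calc e (n + 1) ≤ v (n + 1) + c (n + 1) ^ 2 * e n := he (n + 1) (by omega)
      _ ≤ v (n + 1) + c (n + 1) ^ 2 * V n := by gcongr
      _ = V (n + 1) := (hV (n + 1) (by omega)).symm

lemma sq_mul_sum_Icc_le_of_recursion {Γ a V v c : ℕ → ℝ}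
    (hΓ : ∀ t ≥ 2, Γ t = c t * Γ (t - 1)) (h1 : Γ 1 ^ 2 * a 1 ≤ V 1)
    (ha : ∀ t ≥ 2, Γ t ^ 2 * a t ≤ v t) (hV : ∀ t ≥ 2, V t = v t + c t ^ 2 * V (t - 1)) :
    ∀ t ≥ 1, Γ t ^ 2 * ∑ i ∈ Finset.Icc 1 t, a i ≤ V t := by
  refine le_of_damped_recursion (by simpa using h1) (fun t ht => ?_) hV
  obtain ⟨n, rfl⟩ : ∃ n, t = n + 1 := ⟨t - 1, by omega⟩
  have hlast := ha (n + 1) ht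
  rw [hΓ (n + 1) ht, Nat.add_sub_cancel] at hlast ⊢
  rw [Finset.sum_Icc_succ_top (by omega)]
  linear_combination hlast

section DampedProcess

variable {Ω : Type*} {m0 : MeasurableSpace Ω} {μ : Measure Ω} {X M : ℕ → Ω → ℝ} {c : ℕ → ℝ}

lemma memLp_of_damped_recursion
    (hrec : ∀ t ≥ 2, ∀ ω, M t ω = X t ω + c t * M (t - 1) ω)
    (h1 : MemLp (M 1) 2 μ) (hX : ∀ t ≥ 2, MemLp (X t) 2 μ) :
    ∀ t ≥ 1, MemLp (M t) 2 μ := by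
  intro t ht
  induction t, ht using Nat.le_induction with
  | base => exact h1
  | succ n hn ih =>
    rw [show M (n + 1) = X (n + 1) + c (n + 1) • M n from funext (hrec (n + 1) (by omega))]
    exact (hX (n + 1) (by omega)).add (ih.const_smul _)

lemma stronglyMeasurable_of_damped_recursion (ℱ : Filtration ℕ m0)
    (hrec : ∀ t ≥ 2, ∀ ω, M t ω = X t ω + c t * M (t - 1) ω)
    (h1 : StronglyMeasurable[ℱ 1] (M 1)) (hX : ∀ t ≥ 2, StronglyMeasurable[ℱ t] (X t)) :
    ∀ t ≥ 1, StronglyMeasurable[ℱ t] (M t) := by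
  intro t ht
  induction t, ht using Nat.le_induction with
  | base => exact h1
  | succ n hn ih =>
    rw [show M (n + 1) = X (n + 1) + c (n + 1) • M n from funext (hrec (n + 1) (by omega))]
    exact (hX (n + 1) (by omega)).add ((ih.mono (ℱ.mono n.le_succ)).const_smul _)

lemma integral_sq_le_of_damped_recursion [IsProbabilityMeasure μ] (ℱ : Filtration ℕ m0)
    {v V : ℕ → ℝ} (hrec : ∀ t ≥ 2, ∀ ω, M t ω = X t ω + c t * M (t - 1) ω)
    (hML2 : ∀ t ≥ 1, MemLp (M t) 2 μ) (hMmeas : ∀ t ≥ 1, StronglyMeasurable[ℱ t] (M t))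
    (hXL2 : ∀ t ≥ 2, MemLp (X t) 2 μ) (hXc : ∀ t ≥ 2, μ[X t | ℱ (t - 1)] =ᵐ[μ] 0)
    (hXv : ∀ t ≥ 2, μ[fun ω => X t ω ^ 2 | ℱ (t - 1)] ≤ᵐ[μ] fun _ => v t)
    (h1 : ∫ ω, M 1 ω ^ 2 ∂μ ≤ V 1) (hV : ∀ t ≥ 2, V t = v t + c t ^ 2 * V (t - 1)) :
    ∀ t ≥ 1, ∫ ω, M t ω ^ 2 ∂μ ≤ V t := by
  refine le_of_damped_recursion (e := fun t => ∫ ω, M t ω ^ 2 ∂μ) h1 (fun t ht => ?_) hV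
  calc ∫ ω, M t ω ^ 2 ∂μ = ∫ ω, (X t ω + c t * M (t - 1) ω) ^ 2 ∂μ := by
        simp_rw [hrec t ht]
    _ = ∫ ω, X t ω ^ 2 ∂μ + c t ^ 2 * ∫ ω, M (t - 1) ω ^ 2 ∂μ :=
        integral_sq_add_mul_eq (ℱ.le _) (hMmeas (t - 1) (by omega)) (hML2 (t - 1) (by omega))
          (hXL2 t ht) (hXc t ht) _
    _ ≤ v t + c t ^ 2 * ∫ ω, M (t - 1) ω ^ 2 ∂μ := by
        gcongr
        exact integral_le_of_condExp_le (ℱ.le _) (hXv t ht)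

lemma sq_mul_condVar_div_sub_div_le {m : MeasurableSpace Ω} {Mt Ms Xt : Ω → ℝ} {g g' c C : ℝ}
    (hrec : ∀ ω, Mt ω = Xt ω + c * Ms ω) (hg : g = c * g') (hc : c ≠ 0) (hg' : g' ≠ 0)
    (hXc : μ[Xt|m] =ᵐ[μ] 0) (hXC : μ[fun ω => Xt ω ^ 2 | m] ≤ᵐ[μ] fun _ => C) :
    ∀ᵐ ω ∂μ, g ^ 2 * condVar μ m (fun ω => Mt ω / g - Ms ω / g') ω ≤ C := by
  have hincrement : (fun ω => Mt ω / g - Ms ω / g') = fun ω => g⁻¹ * Xt ω := by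
    funext ω
    rw [hrec ω, hg]
    field_simp
    ring
  rw [hincrement]
  filter_upwards [sq_mul_condVar_inv_mul (μ := μ) (m := m) (hg ▸ mul_ne_zero hc hg') Xt,
    condVar_ae_eq_condExp_sq hXc, hXC] with ω h1 h2 h3
  rw [h1, h2]
  exact h3

end DampedProcess

/-- Variance recursion bound for the centered OEUVRE process: with
`V₁ = b²`, `V_t = (γ_t b + (1-γ_t) σ_t)² + (1-γ_t)² V_{t-1}`, one has
(1) `Var(M_t) ≤ V_t` and (2) `Γ_t² · Σ_{i=1}^t Var(M_i/Γ_i - M_{i-1}/Γ_{i-1} | ℱ_{i-1}) ≤ V_t`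
almost surely (with the convention `M₀/Γ₀ = 0`). -/
theorem oeuvre_var_recursion
    {Ω : Type*} {m0 : MeasurableSpace Ω} {μ : Measure Ω} [IsProbabilityMeasure μ]
    (ℱ : Filtration ℕ m0)
    (Δ Δ' : ℕ → Ω → ℝ) (γ σ : ℕ → ℝ) (b : ℝ) (hb : 0 < b)
    (hΔL2 : ∀ t ≥ 1, MemLp (Δ t) 2 μ)
    (hΔ'L2 : ∀ t ≥ 1, MemLp (Δ' t) 2 μ)
    (hΔmeas : ∀ t ≥ 1, StronglyMeasurable[ℱ t] (Δ t))
    (hΔ'meas : ∀ t ≥ 1, StronglyMeasurable[ℱ t] (Δ' t))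
    (hΔcond : ∀ t ≥ 1, μ[Δ t | ℱ (t - 1)] =ᵐ[μ] 0)
    (hΔ'cond : ∀ t ≥ 1, μ[Δ' t | ℱ (t - 1)] =ᵐ[μ] 0)
    (hσ : ∀ t ≥ 2, 0 ≤ σ t)
    (hγ : ∀ t ≥ 2, γ t ∈ Set.Ico (0 : ℝ) 1)
    (Γ : ℕ → ℝ) (hΓ : ∀ t ≥ 1, Γ t = ∏ i ∈ Finset.Icc 2 t, (1 - γ i))
    (M : ℕ → Ω → ℝ)
    (hM1 : M 1 = Δ 1)
    (hMrec : ∀ t ≥ 2, ∀ ω,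
      M t ω = Δ t ω - (1 - γ t) * Δ' t ω + (1 - γ t) * M (t - 1) ω)
    (V : ℕ → ℝ) (hV1 : V 1 = b ^ 2)
    (hVrec : ∀ t ≥ 2,
      V t = (γ t * b + (1 - γ t) * σ t) ^ 2 + (1 - γ t) ^ 2 * V (t - 1))
    (hΔvar : ∀ t ≥ 1, ∀ᵐ ω ∂μ, condVar μ (ℱ (t - 1)) (Δ t) ω ≤ b ^ 2)
    (hdiffvar : ∀ t ≥ 2, ∀ᵐ ω ∂μ,
      condVar μ (ℱ (t - 1)) (fun ω' => Δ t ω' - Δ' t ω') ω ≤ σ t ^ 2) :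
    ∀ t ≥ 1,
      variance (M t) μ ≤ V t ∧
      (∀ᵐ ω ∂μ, (Γ t) ^ 2 *
        (∑ i ∈ Finset.Icc 1 t,
          condVar μ (ℱ (i - 1))
            (fun ω' => M i ω' / Γ i -
              (if i = 1 then 0 else M (i - 1) ω' / Γ (i - 1))) ω) ≤ V t) := by
  set X : ℕ → Ω → ℝ := fun t ω => Δ t ω - (1 - γ t) * Δ' t ω
  have hγ1 : ∀ t ≥ 2, 0 < 1 - γ t := fun t ht => sub_pos.2 (hγ t ht).2
  have hΓrec : ∀ t ≥ 2, Γ t = (1 - γ t) * Γ (t - 1) := by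
    intro t ht
    obtain ⟨n, rfl⟩ : ∃ n, t = n + 1 := ⟨t - 1, by omega⟩
    rw [hΓ _ (by omega), hΓ _ (by omega), Nat.add_sub_cancel,
      Finset.prod_Icc_succ_top (by omega), mul_comm]
  have hΓpos : ∀ t ≥ 1, 0 < Γ t := fun t ht => (hΓ t ht).symm ▸
    Finset.prod_pos fun i hi => hγ1 i (Finset.mem_Icc.1 hi).1
  have hXL2 : ∀ t ≥ 2, MemLp (X t) 2 μ := fun t ht =>
    (hΔL2 t (by omega)).sub ((hΔ'L2 t (by omega)).const_mul _)
  have hML2 := memLp_of_damped_recursion hMrec (hM1 ▸ hΔL2 1 le_rfl) hXL2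
  have hMmeas := stronglyMeasurable_of_damped_recursion ℱ hMrec (hM1 ▸ hΔmeas 1 le_rfl)
    fun t ht => (hΔmeas t (by omega)).sub ((hΔ'meas t (by omega)).const_mul _)
  have hXc : ∀ t ≥ 2, μ[X t | ℱ (t - 1)] =ᵐ[μ] 0 := fun t ht =>
    condExp_sub_mul_ae_eq_zero ((hΔL2 t (by omega)).integrable one_le_two)
      ((hΔ'L2 t (by omega)).integrable one_le_two) (hΔcond t (by omega)) (hΔ'cond t (by omega)) _
  have hXv : ∀ t ≥ 2, μ[fun ω => X t ω ^ 2 | ℱ (t - 1)]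
      ≤ᵐ[μ] fun _ => (γ t * b + (1 - γ t) * σ t) ^ 2 := fun t ht =>
    condExp_sq_sub_mul_le (hΔL2 t (by omega)) (hΔ'L2 t (by omega)) (hΔcond t (by omega))
      (hΔ'cond t (by omega)) (hγ t ht).1 (hγ t ht).2.le hb.le (hσ t ht) (hΔvar t (by omega))
      (hdiffvar t ht)
  refine fun t ht => ⟨?_, ?_⟩
  · have hM1sq := (condVar_ae_eq_condExp_sq (hΔcond 1 le_rfl)).symm.trans_le (hΔvar 1 le_rfl)
    refine (variance_le_expectation_sq (hML2 t ht).aestronglyMeasurable).trans ?_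
    exact integral_sq_le_of_damped_recursion ℱ hMrec hML2 hMmeas hXL2 hXc hXv
      (by simpa [hM1, hV1] using integral_le_of_condExp_le (ℱ.le _) hM1sq) hVrec t ht
  · have hincrement : ∀ i ≥ 2, ∀ᵐ ω ∂μ, Γ i ^ 2 * condVar μ (ℱ (i - 1)) (fun ω' => M i ω' / Γ i -
        (if i = 1 then 0 else M (i - 1) ω' / Γ (i - 1))) ω ≤ (γ i * b + (1 - γ i) * σ i) ^ 2 :=
      fun i hi => by
        simpa only [show i ≠ 1 by omega, if_false] using sq_mul_condVar_div_sub_div_le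
          (hMrec i hi) (hΓrec i hi) (hγ1 i hi).ne' (hΓpos (i - 1) (by omega)).ne' (hXc i hi)
          (hXv i hi)
    filter_upwards [ae_all_iff.2 fun i => eventually_imp_distrib_left.2 (hincrement i),
      hΔvar 1 le_rfl] with ω hω h1
    exact sq_mul_sum_Icc_le_of_recursion hΓrec (by simpa [hΓ 1 le_rfl, hM1, hV1] using h1) hω
      hVrec t ht
end

section
/- Fix b > 0 and a nonnegative sequence (σ_t)_{t≥2} with σ_t → 0 as t → ∞. Define recursively V_1 = b² and, for t ≥ 2: γ_t* = 0 if V_{t−1} ≤ σ_t(b−σ_t); γ_t* = 1 if σ_t ≥ b; γ_t* = (V_{t−1} − σ_t(b−σ_t)) / (V_{t−1} + (b−σ_t)²) otherwise; and V_t = (γ_t*·b + (1−γ_t*)·σ_t)² + (1−γ_t*)²·V_{t−1}. Then γ_t* → 0 and V_t → 0 as t → ∞. -/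
/-!
Write `Q(x) = (x b + (1 - x) σ_t)² + (1 - x)² V_{t-1}` for the variance bound after one step
with weight `x`. The optimal weight `γ_t*` minimises `Q` over `[0, 1]`, so `V_t` is bounded by `Q`
at any fixed weight `x`. Once `σ_t ≤ x b`, this gives `V_t ≤ (1 - x) V_{t-1} + 4 x² b²`, a
contraction whose fixed point `4 x b²` is arbitrarily small; hence `V_t → 0`. Finally
`0 ≤ γ_t* ≤ V_{t-1} / (b - σ_t)²`, which tends to `0`.
-/

open Filter Topology

/-- The function `Q` above, with `s = σ_t` and `W = V_{t-1}`. -/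
def oeuvreObjective (b s W x : ℝ) : ℝ :=
  (x * b + (1 - x) * s) ^ 2 + (1 - x) ^ 2 * W

noncomputable def optimalWeight (b s W : ℝ) : ℝ :=
  if W ≤ s * (b - s) then 0
  else if b ≤ s then 1
  else (W - s * (b - s)) / (W + (b - s) ^ 2)

noncomputable def oeuvreStep (b s W : ℝ) : ℝ :=
  oeuvreObjective b s W (optimalWeight b s W)

section Step

variable {b s W x : ℝ}

theorem oeuvreObjective_nonneg (hW : 0 ≤ W) : 0 ≤ oeuvreObjective b s W x := by
  unfold oeuvreObjective
  positivity

theorem oeuvreStep_nonneg (hW : 0 ≤ W) : 0 ≤ oeuvreStep b s W :=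
  oeuvreObjective_nonneg hW

theorem oeuvreStep_le_oeuvreObjective (hb : 0 ≤ b) (hW : 0 ≤ W) (hx0 : 0 ≤ x) (hx1 : x ≤ 1) :
    oeuvreStep b s W ≤ oeuvreObjective b s W x := by
  unfold oeuvreStep oeuvreObjective optimalWeight
  split_ifs with hW_le hb_le
  · nlinarith [mul_nonneg hx0 (sub_nonneg.2 hW_le), mul_nonneg (sq_nonneg x) hW,
      sq_nonneg (x * (b - s))]
  · nlinarith [mul_nonneg (sq_nonneg (1 - x)) hW, sq_nonneg ((1 - x) * (s - b)),
      mul_nonneg (mul_nonneg (sub_nonneg.2 hx1) (sub_nonneg.2 hb_le)) hb]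
  · have hA : 0 < W + (b - s) ^ 2 := by
      have : 0 < b - s := sub_pos.2 (not_le.1 hb_le)
      positivity
    -- `Q` is a quadratic in `x` with leading coefficient `A` and vertex `B / A`.
    set A := W + (b - s) ^ 2
    set B := W - s * (b - s)
    have hgap : (x * b + (1 - x) * s) ^ 2 + (1 - x) ^ 2 * W -
        ((B / A * b + (1 - B / A) * s) ^ 2 + (1 - B / A) ^ 2 * W) = (A * x - B) ^ 2 / A := by
      field_simp
      ring
    linarith [div_nonneg (sq_nonneg (A * x - B)) hA.le]

theorem oeuvreStep_le_contraction (hb : 0 ≤ b) (hs : 0 ≤ s) (hW : 0 ≤ W) (hx0 : 0 ≤ x)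
    (hx1 : x ≤ 1) (hsx : s ≤ x * b) :
    oeuvreStep b s W ≤ (1 - x) * W + x * (4 * x * b ^ 2) := by
  have hmix : x * b + (1 - x) * s ≤ 2 * x * b := by nlinarith [mul_nonneg hx0 hs]
  have hmix_nonneg : 0 ≤ x * b + (1 - x) * s := by
    have := mul_nonneg (sub_nonneg.2 hx1) hs
    positivity
  calc oeuvreStep b s W ≤ oeuvreObjective b s W x := oeuvreStep_le_oeuvreObjective hb hW hx0 hx1
    _ ≤ (2 * x * b) ^ 2 + (1 - x) * W := by
      unfold oeuvreObjective
      gcongr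
      nlinarith [mul_nonneg (mul_nonneg hx0 (sub_nonneg.2 hx1)) hW]
    _ = (1 - x) * W + x * (4 * x * b ^ 2) := by ring

theorem optimalWeight_nonneg (hW : 0 ≤ W) : 0 ≤ optimalWeight b s W := by
  unfold optimalWeight
  split_ifs with hW_le hb_le
  · exact le_rfl
  · exact zero_le_one
  · exact div_nonneg (by linarith) (by positivity)

theorem optimalWeight_le_div (hs : 0 ≤ s) (hsb : s < b) (hW : 0 ≤ W) :
    optimalWeight b s W ≤ W / (b - s) ^ 2 := by
  have hbs : 0 < b - s := sub_pos.2 hsb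
  unfold optimalWeight
  split_ifs with hW_le hb_le
  · positivity
  · exact absurd hb_le (not_le.2 hsb)
  · exact div_le_div₀ hW (by nlinarith [mul_nonneg hs hbs.le]) (by positivity) (by linarith)

end Step

theorem eventually_le_of_le_one_sub_mul_add {u : ℕ → ℝ} {x ε δ : ℝ} (hx0 : 0 < x) (hx1 : x ≤ 1)
    (hδ : 0 < δ) (h : ∀ᶠ n in atTop, u (n + 1) ≤ (1 - x) * u n + x * ε) :
    ∀ᶠ n in atTop, u n ≤ ε + δ := by
  obtain ⟨N, hN⟩ := eventually_atTop.1 h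
  have hgeom (k : ℕ) : u (k + N) - ε ≤ (1 - x) ^ k * (u N - ε) := by
    simpa using le_geom (u := fun k ↦ u (k + N) - ε) (sub_nonneg.2 hx1) k fun i _ ↦ by
      have := hN (i + N) (Nat.le_add_left N i)
      rw [add_right_comm] at this
      linarith
  have hpow : Tendsto (fun k : ℕ ↦ (1 - x) ^ k * (u N - ε)) atTop (𝓝 0) := by
    simpa using (tendsto_pow_atTop_nhds_zero_of_lt_one (sub_nonneg.2 hx1)
      (by linarith)).mul_const (u N - ε)
  rw [← map_add_atTop_eq_nat N, eventually_map]
  filter_upwards [hpow.eventually (ge_mem_nhds hδ)] with k hk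
  linarith [hgeom k]

theorem tendsto_zero_of_forall_le_one_sub_mul_add {u : ℕ → ℝ} (hu : ∀ᶠ n in atTop, 0 ≤ u n)
    (h : ∀ ε > 0, ∃ x ∈ Set.Ioc (0 : ℝ) 1, ∀ᶠ n in atTop, u (n + 1) ≤ (1 - x) * u n + x * ε) :
    Tendsto u atTop (𝓝 0) := by
  refine tendsto_order.2 ⟨fun a ha ↦ hu.mono fun n hn ↦ ha.trans_le hn, fun a ha ↦ ?_⟩
  obtain ⟨x, ⟨hx0, hx1⟩, hx⟩ := h (a / 3) (by positivity)
  filter_upwards [eventually_le_of_le_one_sub_mul_add hx0 hx1 (by positivity : 0 < a / 3) hx]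
    with n hn
  linarith

theorem tendsto_zero_of_oeuvreStep {b : ℝ} (hb : 0 < b) {s V : ℕ → ℝ}
    (hs : Tendsto s atTop (𝓝 0)) (hs_nonneg : ∀ᶠ n in atTop, 0 ≤ s n)
    (hV : ∀ᶠ n in atTop, 0 ≤ V n) (hrec : ∀ᶠ n in atTop, V (n + 1) = oeuvreStep b (s n) (V n)) :
    Tendsto V atTop (𝓝 0) := by
  refine tendsto_zero_of_forall_le_one_sub_mul_add hV fun ε hε ↦ ?_
  set x := min 1 (ε / (4 * b ^ 2))
  have hx0 : 0 < x := lt_min one_pos (by positivity)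
  have hxε : 4 * x * b ^ 2 ≤ ε := by
    have := min_le_right 1 (ε / (4 * b ^ 2))
    rw [le_div_iff₀ (by positivity)] at this
    linarith
  refine ⟨x, ⟨hx0, min_le_left _ _⟩, ?_⟩
  filter_upwards [hs.eventually (ge_mem_nhds (mul_pos hx0 hb)), hs_nonneg, hV, hrec]
    with n hsx hsn hVn hVrec
  rw [hVrec]
  calc oeuvreStep b (s n) (V n) ≤ (1 - x) * V n + x * (4 * x * b ^ 2) :=
        oeuvreStep_le_contraction hb.le hsn hVn hx0.le (min_le_left _ _) hsx
    _ ≤ (1 - x) * V n + x * ε := by gcongr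

theorem tendsto_optimalWeight_zero {b : ℝ} (hb : 0 < b) {s W : ℕ → ℝ}
    (hs : Tendsto s atTop (𝓝 0)) (hs_nonneg : ∀ᶠ n in atTop, 0 ≤ s n)
    (hW : Tendsto W atTop (𝓝 0)) (hW_nonneg : ∀ᶠ n in atTop, 0 ≤ W n) :
    Tendsto (fun n ↦ optimalWeight b (s n) (W n)) atTop (𝓝 0) := by
  have hden : Tendsto (fun n ↦ (b - s n) ^ 2) atTop (𝓝 (b ^ 2)) := by
    simpa using ((tendsto_const_nhds (x := b)).sub hs).pow 2
  have hupper : Tendsto (fun n ↦ W n / (b - s n) ^ 2) atTop (𝓝 0) := by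
    have := hW.div hden (pow_ne_zero 2 hb.ne')
    rwa [zero_div] at this
  refine tendsto_of_tendsto_of_tendsto_of_le_of_le' tendsto_const_nhds hupper
    (hW_nonneg.mono fun n ↦ optimalWeight_nonneg) ?_
  filter_upwards [hs.eventually (gt_mem_nhds hb), hs_nonneg, hW_nonneg] with n hsb hsn hWn
  exact optimalWeight_le_div hsn hsb hWn

/-- Consistency of the OEUVRE variance recursion with the optimal weights:
if the stability bounds satisfy `σ_t → 0`, then the optimal weights `γ_t* → 0`
and the variance bounds `V_t → 0`. -/
theorem oeuvre_consistency (b : ℝ) (hb : 0 < b)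
    (σ : ℕ → ℝ) (hσnn : ∀ t ≥ 2, 0 ≤ σ t)
    (hσ0 : Tendsto σ atTop (nhds 0))
    (V γstar : ℕ → ℝ)
    (hV1 : V 1 = b ^ 2)
    (hγ : ∀ t ≥ 2, γstar t =
      if V (t - 1) ≤ σ t * (b - σ t) then 0
      else if b ≤ σ t then 1
      else (V (t - 1) - σ t * (b - σ t)) / (V (t - 1) + (b - σ t) ^ 2))
    (hVrec : ∀ t ≥ 2,
      V t = (γstar t * b + (1 - γstar t) * σ t) ^ 2 + (1 - γstar t) ^ 2 * V (t - 1)) :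
    Tendsto γstar atTop (nhds 0) ∧ Tendsto V atTop (nhds 0) := by
  have hγ' (n : ℕ) (hn : 1 ≤ n) : γstar (n + 1) = optimalWeight b (σ (n + 1)) (V n) := by
    simpa [optimalWeight] using hγ (n + 1) (by omega)
  have hstep (n : ℕ) (hn : 1 ≤ n) : V (n + 1) = oeuvreStep b (σ (n + 1)) (V n) := by
    simpa [oeuvreStep, oeuvreObjective, ← hγ' n hn] using hVrec (n + 1) (by omega)
  have hVnn (n : ℕ) (hn : 1 ≤ n) : 0 ≤ V n := by
    induction n, hn using Nat.le_induction with
    | base => rw [hV1]; positivity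
    | succ n hn ih => rw [hstep n hn]; exact oeuvreStep_nonneg ih
  have hσ' : Tendsto (fun n ↦ σ (n + 1)) atTop (𝓝 0) := (tendsto_add_atTop_iff_nat 1).2 hσ0
  have hσnn' : ∀ᶠ n in atTop, 0 ≤ σ (n + 1) :=
    eventually_atTop.2 ⟨1, fun n hn ↦ hσnn (n + 1) (by omega)⟩
  have hVnn' : ∀ᶠ n in atTop, 0 ≤ V n := eventually_atTop.2 ⟨1, hVnn⟩
  have hV : Tendsto V atTop (𝓝 0) :=
    tendsto_zero_of_oeuvreStep hb hσ' hσnn' hVnn' (eventually_atTop.2 ⟨1, hstep⟩)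
  refine ⟨(tendsto_add_atTop_iff_nat 1).1 ?_, hV⟩
  exact (tendsto_optimalWeight_zero hb hσ' hσnn' hV hVnn').congr'
    (eventually_atTop.2 ⟨1, fun n hn ↦ (hγ' n hn).symm⟩)
end

section
/- Fix b > 0, a nonnegative sequence (σ_t)_{t≥2}, and a sequence (γ_t)_{t≥1} with γ_1 = 1 and γ_t ∈ (0,1] for all t. Define V_1 = b² and V_t = (γ_t·b + (1−γ_t)·σ_t)² + (1−γ_t)²·V_{t−1} for t ≥ 2. Suppose there exist t_0 ≥ 1 and c > 0 such that for all t ≥ max(t_0, 2): σ_t ≤ c·γ_t and 1/γ_t − 1/γ_{t−1} ≤ 1. Then there exists a constant K > 0 such that V_t ≤ K·γ_t for all t ≥ t_0; in particular, if t_0 = 1 one may take K = (b + c)², i.e., V_t ≤ (b+c)²·γ_t for all t ≥ 1. -/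
set_option maxHeartbeats 1000000


/-- Closed-form convergence rate for the OEUVRE variance recursion: if
`σ_t ≤ c·γ_t` and `1/γ_t - 1/γ_{t-1} ≤ 1` for all `t ≥ max(t₀, 2)`, then
`V_t ≤ K·γ_t` for all `t ≥ t₀` for some constant `K > 0`; in particular when
`t₀ = 1` one may take `K = (b + c)²`. -/
theorem oeuvre_rate (b c : ℝ) (hb : 0 < b) (hc : 0 < c)
    (σ γ : ℕ → ℝ) (hσnn : ∀ t ≥ 2, 0 ≤ σ t)
    (hγ1 : γ 1 = 1) (hγ : ∀ t ≥ 1, γ t ∈ Set.Ioc (0 : ℝ) 1)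
    (V : ℕ → ℝ) (hV1 : V 1 = b ^ 2)
    (hVrec : ∀ t ≥ 2,
      V t = (γ t * b + (1 - γ t) * σ t) ^ 2 + (1 - γ t) ^ 2 * V (t - 1))
    (t0 : ℕ) (ht0 : 1 ≤ t0)
    (hcond : ∀ t ≥ max t0 2, σ t ≤ c * γ t ∧ 1 / γ t - 1 / γ (t - 1) ≤ 1) :
    (∃ K > 0, ∀ t ≥ t0, V t ≤ K * γ t) ∧
      (t0 = 1 → ∀ t ≥ 1, V t ≤ (b + c) ^ 2 * γ t) := by
  have hbc : (0:ℝ) < (b + c) ^ 2 := by positivity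
  have key : ∀ K : ℝ, (b + c) ^ 2 ≤ K → V t0 ≤ K * γ t0 →
      ∀ u ≥ t0, V u ≤ K * γ u := by
    intro K hK hbase u hu
    induction u, hu using Nat.le_induction with
    | base => exact hbase
    | succ n hn ih =>
      have hn1 : 1 ≤ n := le_trans ht0 hn
      have h2 : 2 ≤ n + 1 := by omega
      have hmax : max t0 2 ≤ n + 1 := max_le (by omega) h2
      obtain ⟨hσc, hratio⟩ := hcond (n + 1) hmax
      have hγn := hγ n hn1
      have hγn1 := hγ (n + 1) (by omega)
      have hrec := hVrec (n + 1) h2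
      simp only [Nat.add_sub_cancel] at hrec hratio
      set g := γ (n + 1) with hgdef
      set g' := γ n with hg'def
      have hg0 : 0 < g := hγn1.1
      have hg1 : g ≤ 1 := hγn1.2
      have hg'0 : 0 < g' := hγn.1
      have hg'1 : g' ≤ 1 := hγn.2
      have hσ0 : 0 ≤ σ (n + 1) := hσnn _ h2
      -- first term bound
      have h1 : (g * b + (1 - g) * σ (n + 1)) ^ 2 ≤ (g * (b + c)) ^ 2 := by
        have hmul : (1 - g) * σ (n + 1) ≤ 1 * (c * g) :=
          mul_le_mul (by linarith) hσc hσ0 (by norm_num)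
        have hle : g * b + (1 - g) * σ (n + 1) ≤ g * (b + c) := by nlinarith
        have hnn : 0 ≤ g * b + (1 - g) * σ (n + 1) := by
          have := mul_nonneg (by linarith : (0:ℝ) ≤ 1 - g) hσ0
          nlinarith
        exact pow_le_pow_left₀ hnn hle 2
      -- ratio condition in polynomial form: g' - g ≤ g * g'
      have hrat : g' - g ≤ g * g' := by
        have h := mul_le_mul_of_nonneg_right hratio (mul_pos hg0 hg'0).le
        have e1 : (1 / g - 1 / g') * (g * g') = g' - g := by
          field_simp
        rw [e1, one_mul] at h
        exact h
      -- the coefficient inequality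
      have hcoef : g ^ 2 + (1 - g) ^ 2 * g' ≤ g := by
        nlinarith [mul_nonneg (by linarith : (0:ℝ) ≤ 1 - g)
          (by linarith : (0:ℝ) ≤ g * g' - g' + g)]
      have hVn : V n ≤ K * g' := ih
      have hKpos : 0 < K := lt_of_lt_of_le hbc hK
      have h2' : (1 - g) ^ 2 * V n ≤ (1 - g) ^ 2 * (K * g') :=
        mul_le_mul_of_nonneg_left hVn (by positivity)
      calc V (n + 1) = (g * b + (1 - g) * σ (n + 1)) ^ 2 + (1 - g) ^ 2 * V n := hrec
        _ ≤ (g * (b + c)) ^ 2 + (1 - g) ^ 2 * (K * g') := by linarith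
        _ ≤ K * g ^ 2 + (1 - g) ^ 2 * (K * g') := by nlinarith [sq_nonneg g]
        _ = K * (g ^ 2 + (1 - g) ^ 2 * g') := by ring
        _ ≤ K * g := mul_le_mul_of_nonneg_left hcoef hKpos.le
  constructor
  · refine ⟨max ((b + c) ^ 2) (V t0 / γ t0), lt_of_lt_of_le hbc (le_max_left _ _), ?_⟩
    have hγt0 := hγ t0 ht0
    have base : V t0 ≤ max ((b + c) ^ 2) (V t0 / γ t0) * γ t0 :=
      (div_le_iff₀ hγt0.1).mp (le_max_right _ _)
    exact key _ (le_max_left _ _) base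
  · intro h1 t ht
    subst h1
    have base : V 1 ≤ (b + c) ^ 2 * γ 1 := by rw [hγ1, hV1]; nlinarith
    exact key _ le_rfl base t ht
end

section
/- Let (Ω, 𝒜, P) be a probability space with filtration (ℱ_t)_{t≥0}, let (Δ_t)_{t≥1} and (Δ'_t)_{t≥1} be integrable real random variables with Δ_t and Δ'_t ℱ_t-measurable and E[Δ_t | ℱ_{t−1}] = 0, E[Δ'_t | ℱ_{t−1}] = 0 almost surely, let (γ_t)_{t≥2} be real numbers in [0,1), set Γ_1 = 1 and Γ_t = ∏_{i=2}^{t}(1−γ_i), and define M_1 = Δ_1, M_t = Δ_t − (1−γ_t)·Δ'_t + (1−γ_t)·M_{t−1} for t ≥ 2. Then the process (M_t/Γ_t)_{t≥1} is a martingale with respect to the filtration (ℱ_t)_{t≥1}, and E[M_1/Γ_1 | ℱ_0] = 0 almost surely. -/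
open MeasureTheory Filter

/-!
Since `Γ_{t+1} = (1 - γ_{t+1}) Γ_t`, dividing the recursion for `M_{t+1}` by `Γ_{t+1}` gives
`M_{t+1}/Γ_{t+1} - M_t/Γ_t = Δ_{t+1}/Γ_{t+1} - Δ'_{t+1}/Γ_t`, an increment with zero conditional
expectation given `ℱ_t`. Prepending the value `0` at time `0` (whose increment is `M_1/Γ_1 = Δ_1`)
yields a process with conditionally centered increments from time `0` on, hence a martingale
for `ℱ`; this gives both the martingale property and `E[M_1/Γ_1 | ℱ_0] = 0`.
-/

section CondExp

variable {Ω E : Type*} [NormedAddCommGroup E] [NormedSpace ℝ E] [CompleteSpace E]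
  {m m0 : MeasurableSpace Ω} {μ : Measure Ω}

theorem condExp_smul_sub_smul_eq_zero {X Y : Ω → E} (a b : ℝ)
    (hX : Integrable X μ) (hY : Integrable Y μ)
    (hXc : μ[X | m] =ᵐ[μ] 0) (hYc : μ[Y | m] =ᵐ[μ] 0) :
    μ[a • X - b • Y | m] =ᵐ[μ] 0 := by
  filter_upwards [condExp_sub (hX.smul a) (hY.smul b) m, condExp_smul (μ := μ) a X m,
    condExp_smul (μ := μ) b Y m, hXc, hYc] with ω h hX' hY' hX0 hY0
  simp [h, hX', hY', hX0, hY0]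

end CondExp

theorem prod_Icc_one_sub_pos {γ : ℕ → ℝ} (hγ : ∀ t ≥ 2, γ t < 1) (t : ℕ) :
    0 < ∏ i ∈ Finset.Icc 2 t, (1 - γ i) :=
  Finset.prod_pos fun i hi => sub_pos.2 (hγ i (Finset.mem_Icc.1 hi).1)

theorem prod_Icc_two_succ {β : Type*} [CommMonoid β] (f : ℕ → β) {t : ℕ} (ht : 1 ≤ t) :
    ∏ i ∈ Finset.Icc 2 (t + 1), f i = f (t + 1) * ∏ i ∈ Finset.Icc 2 t, f i := by
  rw [Finset.prod_Icc_succ_top (by omega), mul_comm]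

namespace Oeuvre

variable {Ω : Type*} {m0 : MeasurableSpace Ω} {μ : Measure Ω} {ℱ : Filtration ℕ m0}
  {Δ Δ' M : ℕ → Ω → ℝ} {γ : ℕ → ℝ}

theorem integrable_of_rec (hΔint : ∀ t ≥ 1, Integrable (Δ t) μ)
    (hΔ'int : ∀ t ≥ 1, Integrable (Δ' t) μ) (hM1 : M 1 = Δ 1)
    (hMrec : ∀ t ≥ 2, ∀ ω, M t ω = Δ t ω - (1 - γ t) * Δ' t ω + (1 - γ t) * M (t - 1) ω) :
    ∀ t ≥ 1, Integrable (M t) μ := by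
  intro t ht
  induction t, ht using Nat.le_induction with
  | base => exact hM1 ▸ hΔint 1 le_rfl
  | succ n hn ih =>
    rw [funext (hMrec (n + 1) (by omega))]
    exact ((hΔint _ (by omega)).sub ((hΔ'int _ (by omega)).const_mul _)).add (ih.const_mul _)

theorem stronglyMeasurable_of_rec (hΔmeas : ∀ t ≥ 1, StronglyMeasurable[ℱ t] (Δ t))
    (hΔ'meas : ∀ t ≥ 1, StronglyMeasurable[ℱ t] (Δ' t)) (hM1 : M 1 = Δ 1)
    (hMrec : ∀ t ≥ 2, ∀ ω, M t ω = Δ t ω - (1 - γ t) * Δ' t ω + (1 - γ t) * M (t - 1) ω) :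
    ∀ t ≥ 1, StronglyMeasurable[ℱ t] (M t) := by
  intro t ht
  induction t, ht using Nat.le_induction with
  | base => exact hM1 ▸ hΔmeas 1 le_rfl
  | succ n hn ih =>
    rw [funext (hMrec (n + 1) (by omega))]
    exact ((hΔmeas _ (by omega)).sub (stronglyMeasurable_const.mul (hΔ'meas _ (by omega)))).add
      (stronglyMeasurable_const.mul (ih.mono (ℱ.mono (by omega))))

noncomputable def normalized (M : ℕ → Ω → ℝ) (Γ : ℕ → ℝ) (t : ℕ) : Ω → ℝ :=
  if t = 0 then 0 else fun ω => M t ω / Γ t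

theorem normalized_zero (Γ : ℕ → ℝ) : normalized M Γ 0 = 0 :=
  if_pos rfl

theorem normalized_of_ne_zero (Γ : ℕ → ℝ) {t : ℕ} (ht : t ≠ 0) :
    normalized M Γ t = fun ω => M t ω / Γ t :=
  if_neg ht

theorem normalized_succ_sub {Γ : ℕ → ℝ} {n : ℕ} (hn : 1 ≤ n)
    (hΓsucc : Γ (n + 1) = (1 - γ (n + 1)) * Γ n) (hγ : 1 - γ (n + 1) ≠ 0) (hΓ : Γ n ≠ 0)
    (hMrec : ∀ ω, M (n + 1) ω =
      Δ (n + 1) ω - (1 - γ (n + 1)) * Δ' (n + 1) ω + (1 - γ (n + 1)) * M n ω) :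
    normalized M Γ (n + 1) - normalized M Γ n =
      (Γ (n + 1))⁻¹ • Δ (n + 1) - (Γ n)⁻¹ • Δ' (n + 1) := by
  rw [normalized_of_ne_zero Γ (by omega), normalized_of_ne_zero Γ (by omega)]
  funext ω
  simp only [Pi.sub_apply, Pi.smul_apply, smul_eq_mul, hMrec ω, hΓsucc]
  field_simp
  ring

theorem martingale_normalized [IsProbabilityMeasure μ]
    (hΔint : ∀ t ≥ 1, Integrable (Δ t) μ) (hΔ'int : ∀ t ≥ 1, Integrable (Δ' t) μ)
    (hΔmeas : ∀ t ≥ 1, StronglyMeasurable[ℱ t] (Δ t))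
    (hΔ'meas : ∀ t ≥ 1, StronglyMeasurable[ℱ t] (Δ' t))
    (hΔcond : ∀ t ≥ 1, μ[Δ t | ℱ (t - 1)] =ᵐ[μ] 0)
    (hΔ'cond : ∀ t ≥ 1, μ[Δ' t | ℱ (t - 1)] =ᵐ[μ] 0)
    (hγ : ∀ t ≥ 2, γ t < 1) {Γ : ℕ → ℝ} (hΓ : ∀ t ≥ 1, Γ t = ∏ i ∈ Finset.Icc 2 t, (1 - γ i))
    (hM1 : M 1 = Δ 1)
    (hMrec : ∀ t ≥ 2, ∀ ω, M t ω = Δ t ω - (1 - γ t) * Δ' t ω + (1 - γ t) * M (t - 1) ω) :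
    Martingale (normalized M Γ) ℱ μ := by
  refine martingale_of_condExp_sub_eq_zero_nat (fun t => ?_) (fun t => ?_) fun t => ?_
  · rcases Nat.eq_zero_or_pos t with rfl | ht
    · exact normalized_zero (M := M) Γ ▸ stronglyMeasurable_const
    simp_rw [normalized_of_ne_zero Γ ht.ne', div_eq_mul_inv]
    exact (stronglyMeasurable_of_rec hΔmeas hΔ'meas hM1 hMrec t ht).mul_const _
  · rcases Nat.eq_zero_or_pos t with rfl | ht
    · exact normalized_zero (M := M) Γ ▸ integrable_zero _ _ _
    rw [normalized_of_ne_zero Γ ht.ne']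
    exact (integrable_of_rec hΔint hΔ'int hM1 hMrec t ht).div_const _
  rcases Nat.eq_zero_or_pos t with rfl | ht
  · have hΓ1 : Γ 1 = 1 := by simp [hΓ 1 le_rfl]
    have hN1 : normalized M Γ 1 - normalized M Γ 0 = Δ 1 := by
      rw [normalized_zero, normalized_of_ne_zero Γ one_ne_zero, sub_zero, hΓ1, hM1]
      simp
    simpa [hN1] using hΔcond 1 le_rfl
  have hΓsucc : Γ (t + 1) = (1 - γ (t + 1)) * Γ t := by
    rw [hΓ _ (by omega), hΓ t ht, prod_Icc_two_succ _ ht]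
  rw [normalized_succ_sub ht hΓsucc (sub_ne_zero.2 (hγ _ (by omega)).ne')
    (hΓ t ht ▸ prod_Icc_one_sub_pos hγ t).ne' (hMrec (t + 1) (by omega))]
  exact condExp_smul_sub_smul_eq_zero _ _ (hΔint _ (by omega)) (hΔ'int _ (by omega))
    (hΔcond (t + 1) (by omega)) (hΔ'cond (t + 1) (by omega))

end Oeuvre

/-- Martingale structure of the OEUVRE process: with `Γ₁ = 1`,
`Γ_t = ∏_{i=2}^t (1 - γ_i)`, `M₁ = Δ₁`, and
`M_t = Δ_t - (1-γ_t)Δ'_t + (1-γ_t)M_{t-1}`, the process `(M_t/Γ_t)_{t ≥ 1}` is a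
martingale with respect to `(ℱ_t)_{t ≥ 1}` (it is integrable, adapted, and
satisfies `E[M_t/Γ_t | ℱ_s] = M_s/Γ_s` for `1 ≤ s ≤ t`), and
`E[M₁/Γ₁ | ℱ₀] = 0` almost surely. -/
theorem oeuvre_martingale
    {Ω : Type*} {m0 : MeasurableSpace Ω} {μ : Measure Ω} [IsProbabilityMeasure μ]
    (ℱ : Filtration ℕ m0)
    (Δ Δ' : ℕ → Ω → ℝ) (γ : ℕ → ℝ)
    (hΔint : ∀ t ≥ 1, Integrable (Δ t) μ)
    (hΔ'int : ∀ t ≥ 1, Integrable (Δ' t) μ)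
    (hΔmeas : ∀ t ≥ 1, StronglyMeasurable[ℱ t] (Δ t))
    (hΔ'meas : ∀ t ≥ 1, StronglyMeasurable[ℱ t] (Δ' t))
    (hΔcond : ∀ t ≥ 1, μ[Δ t | ℱ (t - 1)] =ᵐ[μ] 0)
    (hΔ'cond : ∀ t ≥ 1, μ[Δ' t | ℱ (t - 1)] =ᵐ[μ] 0)
    (hγ : ∀ t ≥ 2, γ t ∈ Set.Ico (0 : ℝ) 1)
    (Γ : ℕ → ℝ) (hΓ : ∀ t ≥ 1, Γ t = ∏ i ∈ Finset.Icc 2 t, (1 - γ i))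
    (M : ℕ → Ω → ℝ)
    (hM1 : M 1 = Δ 1)
    (hMrec : ∀ t ≥ 2, ∀ ω,
      M t ω = Δ t ω - (1 - γ t) * Δ' t ω + (1 - γ t) * M (t - 1) ω) :
    (∀ t ≥ 1, Integrable (fun ω => M t ω / Γ t) μ) ∧
    (∀ t ≥ 1, StronglyMeasurable[ℱ t] (fun ω => M t ω / Γ t)) ∧
    (∀ s t : ℕ, 1 ≤ s → s ≤ t →
      μ[fun ω => M t ω / Γ t | ℱ s] =ᵐ[μ] fun ω => M s ω / Γ s) ∧
    μ[fun ω => M 1 ω / Γ 1 | ℱ 0] =ᵐ[μ] 0 := by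
  have hmart : Martingale (Oeuvre.normalized M Γ) ℱ μ :=
    Oeuvre.martingale_normalized hΔint hΔ'int hΔmeas hΔ'meas hΔcond hΔ'cond
      (fun t ht => (hγ t ht).2) hΓ hM1 hMrec
  have hN : ∀ t ≥ 1, Oeuvre.normalized M Γ t = fun ω => M t ω / Γ t :=
    fun t ht => Oeuvre.normalized_of_ne_zero Γ (by omega)
  refine ⟨fun t ht => hN t ht ▸ hmart.integrable t, fun t ht => hN t ht ▸ hmart.stronglyAdapted t,
    fun s t hs hst => ?_, ?_⟩
  · simpa only [hN t (hs.trans hst), hN s hs] using hmart.condExp_ae_eq hst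
  · simpa only [hN 1 le_rfl, Oeuvre.normalized_zero] using hmart.condExp_ae_eq zero_le_one
end

section
/- Let (Ω, 𝒜, P) be a probability space with filtration (ℱ_t)_{t≥0}, let (Δ_t)_{t≥1} and (Δ'_t)_{t≥1} be real random variables with Δ_t and Δ'_t ℱ_t-measurable and E[Δ_t | ℱ_{t−1}] = 0, E[Δ'_t | ℱ_{t−1}] = 0 almost surely. Fix b > 0 with |Δ_t| ≤ b almost surely for all t ≥ 1, and a nonnegative sequence (σ_t)_{t≥2} with |Δ_t − Δ'_t| ≤ σ_t almost surely for all t ≥ 2. Let (γ_t)_{t≥2} be in [0,1), set Γ_1 = 1, Γ_t = ∏_{i=2}^{t}(1−γ_i), M_1 = Δ_1, M_t = Δ_t − (1−γ_t)·Δ'_t + (1−γ_t)·M_{t−1}, and define V_1 = b², V_t = (γ_t·b + (1−γ_t)·σ_t)² + (1−γ_t)²·V_{t−1}. Then for every ε > 0 and every T ≥ 1, P(|M_T| ≥ ε) ≤ 2·exp(−ε² / (2·V_T)). -/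
/-!
Write `M_t = D_t + (1 - γ_t) M_{t-1}` with `D_t = Δ_t - (1 - γ_t) Δ'_t`. The increment `D_t` is
conditionally centred given `ℱ_{t-1}` and bounded by `γ_t b + (1 - γ_t) σ_t`, so bounding
`exp (l D_t)` by its chord over that interval (Hoeffding's argument) and integrating against the
`ℱ_{t-1}`-measurable factor `exp (l (1 - γ_t) M_{t-1})` shows inductively that `M_t` has a
sub-Gaussian moment generating function with variance proxy `V_t`. A Chernoff bound on each tail
then gives the claim.
-/

open MeasureTheory Filter ProbabilityTheory Real
open scoped NNReal

lemma exp_mul_le_cosh_add_sinh_div_mul {x c : ℝ} (l : ℝ) (hx : |x| ≤ c) :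
    exp (l * x) ≤ cosh (l * c) + sinh (l * c) / c * x := by
  obtain ⟨hcx, hxc⟩ := abs_le.mp hx
  rcases (abs_nonneg x).trans hx |>.eq_or_lt with rfl | hc
  · simp [show x = 0 by linarith]
  -- `l * x` is the convex combination of `± l * c` with weights `(c ∓ x) / (2 * c)`.
  have hw : (c - x) / (2 * c) + (c + x) / (2 * c) = 1 := by field_simp; ring
  have h := convexOn_exp.2 (Set.mem_univ (-(l * c))) (Set.mem_univ (l * c))
    (div_nonneg (by linarith) (by linarith)) (div_nonneg (by linarith) (by linarith)) hw
  have harg : (c - x) / (2 * c) * -(l * c) + (c + x) / (2 * c) * (l * c) = l * x := by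
    field_simp; ring
  simp only [smul_eq_mul, harg] at h
  refine h.trans_eq ?_
  rw [cosh_eq, sinh_eq]
  field_simp
  ring

lemma abs_sub_one_sub_mul_le {x y b s γ : ℝ} (hγ₀ : 0 ≤ γ) (hγ₁ : γ ≤ 1) (hx : |x| ≤ b)
    (hxy : |x - y| ≤ s) : |x - (1 - γ) * y| ≤ γ * b + (1 - γ) * s := calc
  |x - (1 - γ) * y| = |γ * x + (1 - γ) * (x - y)| := by ring_nf
  _ ≤ |γ * x| + |(1 - γ) * (x - y)| := abs_add_le _ _
  _ = γ * |x| + (1 - γ) * |x - y| := by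
    rw [abs_mul, abs_mul, abs_of_nonneg hγ₀, abs_of_nonneg (sub_nonneg.2 hγ₁)]
  _ ≤ γ * b + (1 - γ) * s := by gcongr

section

variable {Ω : Type*} {m m0 : MeasurableSpace Ω} {μ : Measure Ω}

lemma condExp_sub_const_mul_eq_zero {X Y : Ω → ℝ} (hX : Integrable X μ) (hY : Integrable Y μ)
    (hX_cond : μ[X | m] =ᵐ[μ] 0) (hY_cond : μ[Y | m] =ᵐ[μ] 0) (r : ℝ) :
    μ[fun ω ↦ X ω - r * Y ω | m] =ᵐ[μ] 0 := by
  have hsub : μ[fun ω ↦ X ω - r * Y ω | m] =ᵐ[μ] μ[X | m] - μ[fun ω ↦ r * Y ω | m] :=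
    condExp_sub hX (hY.const_mul r) m
  have hsmul : μ[fun ω ↦ r * Y ω | m] =ᵐ[μ] fun ω ↦ r * μ[Y | m] ω := condExp_smul r Y m
  filter_upwards [hsub, hsmul, hX_cond, hY_cond] with ω hsub hsmul hX0 hY0
  simp [hsub, hsmul, hX0, hY0]

namespace ProbabilityTheory

lemma integral_mul_exp_mul_le_of_condExp_eq_zero [IsFiniteMeasure μ] (hm : m ≤ m0)
    {g X : Ω → ℝ} (hg : StronglyMeasurable[m] g) (hg_nonneg : 0 ≤ g) (hg_int : Integrable g μ)
    (hX : AEStronglyMeasurable X μ) {c : ℝ} (hXc : ∀ᵐ ω ∂μ, |X ω| ≤ c)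
    (hX_cond : μ[X | m] =ᵐ[μ] 0) (l : ℝ) :
    ∫ ω, g ω * exp (l * X ω) ∂μ ≤ exp (l ^ 2 * c ^ 2 / 2) * ∫ ω, g ω ∂μ := by
  have hXc' : ∀ᵐ ω ∂μ, ‖X ω‖ ≤ c := by simpa only [Real.norm_eq_abs] using hXc
  have hX_int : Integrable X μ := .of_bound hX c hXc'
  have hgX_int : Integrable (fun ω ↦ g ω * X ω) μ := hg_int.mul_bdd hX hXc'
  have hgX : ∫ ω, g ω * X ω ∂μ = 0 := calc
    ∫ ω, g ω * X ω ∂μ = ∫ ω, μ[g * X | m] ω ∂μ := (integral_condExp hm).symm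
    _ = ∫ ω, (g * μ[X | m]) ω ∂μ :=
      integral_congr_ae (condExp_mul_of_stronglyMeasurable_left hg hgX_int hX_int)
    _ = ∫ ω, (g * 0 : Ω → ℝ) ω ∂μ := integral_congr_ae (EventuallyEq.rfl.mul hX_cond)
    _ = 0 := by simp
  calc ∫ ω, g ω * exp (l * X ω) ∂μ
      ≤ ∫ ω, cosh (l * c) * g ω + sinh (l * c) / c * (g ω * X ω) ∂μ := by
        refine integral_mono_of_nonneg (.of_forall fun ω ↦ mul_nonneg (hg_nonneg ω) (exp_pos _).le)
          ((hg_int.const_mul _).add (hgX_int.const_mul _)) ?_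
        filter_upwards [hXc] with ω hω
        have := mul_le_mul_of_nonneg_left (exp_mul_le_cosh_add_sinh_div_mul l hω) (hg_nonneg ω)
        linarith
    _ = cosh (l * c) * ∫ ω, g ω ∂μ := by
        rw [integral_add (hg_int.const_mul _) (hgX_int.const_mul _), integral_const_mul,
          integral_const_mul, hgX, mul_zero, add_zero]
    _ ≤ exp (l ^ 2 * c ^ 2 / 2) * ∫ ω, g ω ∂μ := by
        gcongr
        · exact integral_nonneg hg_nonneg
        · exact (cosh_le_exp_half_sq _).trans_eq (by ring_nf)

lemma hasSubgaussianMGF_of_condExp_eq_zero [IsProbabilityMeasure μ] (hm : m ≤ m0) {X : Ω → ℝ}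
    (hX : AEStronglyMeasurable X μ) {c : ℝ} (hXc : ∀ᵐ ω ∂μ, |X ω| ≤ c)
    (hX_cond : μ[X | m] =ᵐ[μ] 0) :
    HasSubgaussianMGF X ⟨c ^ 2, sq_nonneg c⟩ μ where
  integrable_exp_mul _ := integrable_exp_mul_of_mem_Icc hX.aemeasurable (hXc.mono fun _ ↦ abs_le.mp)
  mgf_le t := by
    have h := integral_mul_exp_mul_le_of_condExp_eq_zero hm stronglyMeasurable_const zero_le_one
      (integrable_const 1) hX hXc hX_cond t
    simp only [one_mul, integral_const, probReal_univ, smul_eq_mul, mul_one] at h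
    change _ ≤ exp (c ^ 2 * t ^ 2 / 2)
    exact h.trans_eq (by ring_nf)

lemma HasSubgaussianMGF.add_mul_of_condExp_eq_zero [IsFiniteMeasure μ] (hm : m ≤ m0)
    {Y D : Ω → ℝ} {v : ℝ≥0} (hY : HasSubgaussianMGF Y v μ) (hYm : StronglyMeasurable[m] Y)
    (hD : AEStronglyMeasurable D μ) {c : ℝ} (hDc : ∀ᵐ ω ∂μ, |D ω| ≤ c)
    (hD_cond : μ[D | m] =ᵐ[μ] 0) (a : ℝ) :
    HasSubgaussianMGF (fun ω ↦ D ω + a * Y ω) ⟨c ^ 2 + a ^ 2 * v, by positivity⟩ μ where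
  integrable_exp_mul t := by
    have hbd : ∀ᵐ ω ∂μ, ‖exp (t * D ω)‖ ≤ exp (|t| * c) := by
      filter_upwards [hDc] with ω hω
      rw [norm_of_nonneg (exp_pos _).le, exp_le_exp]
      exact (le_abs_self _).trans (by rw [abs_mul]; gcongr)
    simp_rw [mul_add, exp_add, ← mul_assoc]
    exact (hY.integrable_exp_mul (t * a)).bdd_mul (by fun_prop) hbd
  mgf_le t := calc
    mgf (fun ω ↦ D ω + a * Y ω) μ t = ∫ ω, exp (t * a * Y ω) * exp (t * D ω) ∂μ := by
      rw [mgf]; congr with ω; rw [← exp_add]; ring_nf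
    _ ≤ exp (t ^ 2 * c ^ 2 / 2) * ∫ ω, exp (t * a * Y ω) ∂μ :=
      integral_mul_exp_mul_le_of_condExp_eq_zero hm (by fun_prop) (fun _ ↦ (exp_pos _).le)
        (hY.integrable_exp_mul _) hD hDc hD_cond t
    _ ≤ exp (t ^ 2 * c ^ 2 / 2) * exp (v * (t * a) ^ 2 / 2) := by gcongr; exact hY.mgf_le _
    _ = exp ((c ^ 2 + a ^ 2 * v) * t ^ 2 / 2) := by rw [← exp_add]; ring_nf

lemma HasSubgaussianMGF.measure_abs_ge_le [IsFiniteMeasure μ] {X : Ω → ℝ} {v : ℝ≥0}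
    (h : HasSubgaussianMGF X v μ) {ε : ℝ} (hε : 0 ≤ ε) :
    μ {ω | ε ≤ |X ω|} ≤ ENNReal.ofReal (2 * exp (-ε ^ 2 / (2 * v))) := calc
  μ {ω | ε ≤ |X ω|} ≤ μ {ω | ε ≤ X ω} + μ {ω | ε ≤ (-X) ω} :=
    (measure_mono (t := {ω | ε ≤ X ω} ∪ {ω | ε ≤ (-X) ω})
      fun ω (hω : ε ≤ |X ω|) ↦ le_abs.mp hω).trans (measure_union_le _ _)
  _ = ENNReal.ofReal (μ.real {ω | ε ≤ X ω}) + ENNReal.ofReal (μ.real {ω | ε ≤ (-X) ω}) := by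
    rw [ofReal_measureReal, ofReal_measureReal]
  _ ≤ ENNReal.ofReal (exp (-ε ^ 2 / (2 * v))) + ENNReal.ofReal (exp (-ε ^ 2 / (2 * v))) := by
    gcongr
    exacts [h.measure_ge_le hε, h.neg.measure_ge_le hε]
  _ = ENNReal.ofReal (2 * exp (-ε ^ 2 / (2 * v))) := by
    rw [← ENNReal.ofReal_add (exp_pos _).le (exp_pos _).le]
    ring_nf

theorem hasSubgaussianMGF_of_eq_add_mul [IsFiniteMeasure μ] (ℱ : Filtration ℕ m0)
    {M D : ℕ → Ω → ℝ} {a c V : ℕ → ℝ} {v₁ : ℝ≥0}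
    (hM₁ : StronglyMeasurable[ℱ 1] (M 1)) (hM₁_sg : HasSubgaussianMGF (M 1) v₁ μ)
    (hV₁ : (v₁ : ℝ) = V 1)
    (hD : ∀ t ≥ 2, StronglyMeasurable[ℱ t] (D t)) (hDc : ∀ t ≥ 2, ∀ᵐ ω ∂μ, |D t ω| ≤ c t)
    (hD_cond : ∀ t ≥ 2, μ[D t | ℱ (t - 1)] =ᵐ[μ] 0)
    (hM : ∀ t ≥ 2, ∀ ω, M t ω = D t ω + a t * M (t - 1) ω)
    (hV : ∀ t ≥ 2, V t = c t ^ 2 + a t ^ 2 * V (t - 1)) (T : ℕ) (hT : 1 ≤ T) :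
    StronglyMeasurable[ℱ T] (M T) ∧ ∃ v : ℝ≥0, (v : ℝ) = V T ∧ HasSubgaussianMGF (M T) v μ := by
  induction T, hT using Nat.le_induction with
  | base => exact ⟨hM₁, v₁, hV₁, hM₁_sg⟩
  | succ t ht ih =>
    obtain ⟨hMt, v, hv, hMt_sg⟩ := ih
    have ht2 : t + 1 ≥ 2 := by omega
    have hM_succ : M (t + 1) = fun ω ↦ D (t + 1) ω + a (t + 1) * M t ω :=
      funext (hM (t + 1) ht2)
    rw [hM_succ]
    refine ⟨(hD _ ht2).add ((hMt.mono (ℱ.mono t.le_succ)).const_mul _), _, ?_,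
      hMt_sg.add_mul_of_condExp_eq_zero (ℱ.le t) hMt
        ((hD _ ht2).mono (ℱ.le _)).aestronglyMeasurable (hDc _ ht2) (hD_cond _ ht2) _⟩
    simp only [hV _ ht2, Nat.add_sub_cancel, hv]
    rfl

end ProbabilityTheory

end

theorem oeuvre_fixed_time_concentration_general
    {Ω : Type*} {m0 : MeasurableSpace Ω} {μ : Measure Ω} [IsProbabilityMeasure μ]
    (ℱ : Filtration ℕ m0)
    (Δ Δ' : ℕ → Ω → ℝ) (γ σ : ℕ → ℝ) (b : ℝ)
    (hΔmeas : ∀ t ≥ 1, StronglyMeasurable[ℱ t] (Δ t))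
    (hΔ'meas : ∀ t ≥ 1, StronglyMeasurable[ℱ t] (Δ' t))
    (hΔcond : ∀ t ≥ 1, μ[Δ t | ℱ (t - 1)] =ᵐ[μ] 0)
    (hΔ'cond : ∀ t ≥ 1, μ[Δ' t | ℱ (t - 1)] =ᵐ[μ] 0)
    (hΔbd : ∀ t ≥ 1, ∀ᵐ ω ∂μ, |Δ t ω| ≤ b)
    (hstab : ∀ t ≥ 2, ∀ᵐ ω ∂μ, |Δ t ω - Δ' t ω| ≤ σ t)
    (hγ : ∀ t ≥ 2, γ t ∈ Set.Ico (0 : ℝ) 1)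
    (M : ℕ → Ω → ℝ)
    (hM1 : M 1 = Δ 1)
    (hMrec : ∀ t ≥ 2, ∀ ω,
      M t ω = Δ t ω - (1 - γ t) * Δ' t ω + (1 - γ t) * M (t - 1) ω)
    (V : ℕ → ℝ) (hV1 : V 1 = b ^ 2)
    (hVrec : ∀ t ≥ 2,
      V t = (γ t * b + (1 - γ t) * σ t) ^ 2 + (1 - γ t) ^ 2 * V (t - 1)) :
    ∀ ε > (0 : ℝ), ∀ T ≥ 1,
      μ {ω | ε ≤ |M T ω|} ≤ ENNReal.ofReal (2 * Real.exp (-ε ^ 2 / (2 * V T))) := by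
  have hΔ_aesm (t : ℕ) (ht : 1 ≤ t) : AEStronglyMeasurable (Δ t) μ :=
    ((hΔmeas t ht).mono (ℱ.le t)).aestronglyMeasurable
  have hΔ_int (t : ℕ) (ht : 1 ≤ t) : Integrable (Δ t) μ :=
    .of_bound (hΔ_aesm t ht) b (by simpa using hΔbd t ht)
  have hΔ'_int (t : ℕ) (ht : 2 ≤ t) : Integrable (Δ' t) μ := by
    refine .of_bound ((hΔ'meas t (by omega)).mono (ℱ.le t)).aestronglyMeasurable (b + σ t) ?_
    filter_upwards [hΔbd t (by omega), hstab t ht] with ω h₁ h₂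
    rw [Real.norm_eq_abs]
    linarith [abs_sub_abs_le_abs_sub (Δ' t ω) (Δ t ω), abs_sub_comm (Δ' t ω) (Δ t ω)]
  intro ε hε T hT
  obtain ⟨-, v, hv, hM_sg⟩ := hasSubgaussianMGF_of_eq_add_mul ℱ
    (D := fun t ω ↦ Δ t ω - (1 - γ t) * Δ' t ω) (a := fun t ↦ 1 - γ t)
    (c := fun t ↦ γ t * b + (1 - γ t) * σ t) (v₁ := ⟨b ^ 2, sq_nonneg b⟩) (hM1 ▸ hΔmeas 1 le_rfl)
    (hM1 ▸ hasSubgaussianMGF_of_condExp_eq_zero (ℱ.le 0) (hΔ_aesm 1 le_rfl) (hΔbd 1 le_rfl)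
      (hΔcond 1 le_rfl)) hV1.symm
    (fun t ht ↦ (hΔmeas t (by omega)).sub ((hΔ'meas t (by omega)).const_mul _))
    (fun t ht ↦ by
      filter_upwards [hΔbd t (by omega), hstab t ht] with ω h₁ h₂
      exact abs_sub_one_sub_mul_le (hγ t ht).1 (hγ t ht).2.le h₁ h₂)
    (fun t ht ↦ condExp_sub_const_mul_eq_zero (hΔ_int t (by omega)) (hΔ'_int t ht)
      (hΔcond t (by omega)) (hΔ'cond t (by omega)) _)
    hMrec hVrec T hT
  rw [← hv]
  exact hM_sg.measure_abs_ge_le hε.le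

/-- Fixed-time Azuma–Hoeffding concentration for the centered OEUVRE process:
with `|Δ_t| ≤ b`, `|Δ_t - Δ'_t| ≤ σ_t`, and the variance recursion
`V₁ = b²`, `V_t = (γ_t b + (1-γ_t) σ_t)² + (1-γ_t)² V_{t-1}`, for every `ε > 0`
and `T ≥ 1`, `P(|M_T| ≥ ε) ≤ 2 exp(-ε²/(2 V_T))`. -/
theorem oeuvre_fixed_time_concentration
    {Ω : Type*} {m0 : MeasurableSpace Ω} {μ : Measure Ω} [IsProbabilityMeasure μ]
    (ℱ : Filtration ℕ m0)
    (Δ Δ' : ℕ → Ω → ℝ) (γ σ : ℕ → ℝ) (b : ℝ) (hb : 0 < b)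
    (hΔmeas : ∀ t ≥ 1, StronglyMeasurable[ℱ t] (Δ t))
    (hΔ'meas : ∀ t ≥ 1, StronglyMeasurable[ℱ t] (Δ' t))
    (hΔcond : ∀ t ≥ 1, μ[Δ t | ℱ (t - 1)] =ᵐ[μ] 0)
    (hΔ'cond : ∀ t ≥ 1, μ[Δ' t | ℱ (t - 1)] =ᵐ[μ] 0)
    (hΔbd : ∀ t ≥ 1, ∀ᵐ ω ∂μ, |Δ t ω| ≤ b)
    (hσnn : ∀ t ≥ 2, 0 ≤ σ t)
    (hstab : ∀ t ≥ 2, ∀ᵐ ω ∂μ, |Δ t ω - Δ' t ω| ≤ σ t)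
    (hγ : ∀ t ≥ 2, γ t ∈ Set.Ico (0 : ℝ) 1)
    (Γ : ℕ → ℝ) (hΓ : ∀ t ≥ 1, Γ t = ∏ i ∈ Finset.Icc 2 t, (1 - γ i))
    (M : ℕ → Ω → ℝ)
    (hM1 : M 1 = Δ 1)
    (hMrec : ∀ t ≥ 2, ∀ ω,
      M t ω = Δ t ω - (1 - γ t) * Δ' t ω + (1 - γ t) * M (t - 1) ω)
    (V : ℕ → ℝ) (hV1 : V 1 = b ^ 2)
    (hVrec : ∀ t ≥ 2,
      V t = (γ t * b + (1 - γ t) * σ t) ^ 2 + (1 - γ t) ^ 2 * V (t - 1)) :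
    ∀ ε > (0 : ℝ), ∀ T ≥ 1,
      μ {ω | ε ≤ |M T ω|} ≤ ENNReal.ofReal (2 * Real.exp (-ε ^ 2 / (2 * V T))) :=
  oeuvre_fixed_time_concentration_general ℱ Δ Δ' γ σ b hΔmeas hΔ'meas hΔcond hΔ'cond hΔbd hstab hγ M
    hM1 hMrec V hV1 hVrec
end

section
/- Fix b, c, b̂, ĉ > 0, a nonnegative sequence (r_t)_{t≥2}, and a sequence (γ_t)_{t≥2} in [0,1]. Define V_1 = b², V_t = (γ_t·b + (1−γ_t)·c·r_t)² + V_{t−1} for t ≥ 2, and V†_1 = b̂², V†_t = (γ_t·b̂ + (1−γ_t)·ĉ·r_t)² + V†_{t−1} for t ≥ 2. Then for all t ≥ 1, V_t ≤ V†_t / ( min{1, (ĉ/c)²} · min{1, (b̂/b)²} ). -/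
/-- Robustness of the OEUVRE variance recursion to misspecified constants: with
`V₁ = b²`, `V_t = (γ_t b + (1-γ_t) c r_t)² + V_{t-1}` and the analogous recursion
`V†` with misspecified constants `b̂, ĉ` in place of `b, c`, one has
`V_t ≤ V†_t / (min{1, (ĉ/c)²} · min{1, (b̂/b)²})` for all `t ≥ 1`. -/
theorem oeuvre_misspecified_constants (b c bhat chat : ℝ)
    (hb : 0 < b) (hc : 0 < c) (hbhat : 0 < bhat) (hchat : 0 < chat)
    (r : ℕ → ℝ) (hr : ∀ t ≥ 2, 0 ≤ r t)
    (γ : ℕ → ℝ) (hγ : ∀ t ≥ 2, γ t ∈ Set.Icc (0 : ℝ) 1)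
    (V Vdag : ℕ → ℝ)
    (hV1 : V 1 = b ^ 2)
    (hVrec : ∀ t ≥ 2, V t = (γ t * b + (1 - γ t) * c * r t) ^ 2 + V (t - 1))
    (hVdag1 : Vdag 1 = bhat ^ 2)
    (hVdagrec : ∀ t ≥ 2,
      Vdag t = (γ t * bhat + (1 - γ t) * chat * r t) ^ 2 + Vdag (t - 1)) :
    ∀ t ≥ 1, V t ≤ Vdag t /
      (min 1 ((chat / c) ^ 2) * min 1 ((bhat / b) ^ 2)) := by
  set a₁ : ℝ := min 1 (bhat / b) with ha₁
  set a₂ : ℝ := min 1 (chat / c) with ha₂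
  have ha₁0 : 0 ≤ a₁ := le_min one_pos.le (div_pos hbhat hb).le
  have ha₂0 : 0 ≤ a₂ := le_min one_pos.le (div_pos hchat hc).le
  have hsq₁ : a₁ ^ 2 = min 1 ((bhat / b) ^ 2) := by
    rcases le_total (bhat / b) 1 with h | h <;> rw [ha₁]
    · rw [min_eq_right h, min_eq_right (pow_le_one₀ (div_pos hbhat hb).le h)]
    · rw [min_eq_left h, min_eq_left (one_le_pow₀ h), one_pow]
  have hsq₂ : a₂ ^ 2 = min 1 ((chat / c) ^ 2) := by
    rcases le_total (chat / c) 1 with h | h <;> rw [ha₂]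
    · rw [min_eq_right h, min_eq_right (pow_le_one₀ (div_pos hchat hc).le h)]
    · rw [min_eq_left h, min_eq_left (one_le_pow₀ h), one_pow]
  have hm0 : 0 < min 1 ((chat / c) ^ 2) * min 1 ((bhat / b) ^ 2) :=
    mul_pos (lt_min one_pos (pow_pos (div_pos hchat hc) 2))
      (lt_min one_pos (pow_pos (div_pos hbhat hb) 2))
  have ha₁b : a₁ * b ≤ bhat := by
    calc a₁ * b ≤ (bhat / b) * b := by
          apply mul_le_mul_of_nonneg_right (min_le_right _ _) hb.le
      _ = bhat := by field_simp
  have ha₂c : a₂ * c ≤ chat := by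
    calc a₂ * c ≤ (chat / c) * c := by
          apply mul_le_mul_of_nonneg_right (min_le_right _ _) hc.le
      _ = chat := by field_simp
  have key : ∀ t ≥ 1,
      (min 1 ((chat / c) ^ 2) * min 1 ((bhat / b) ^ 2)) * V t ≤ Vdag t := by
    intro t ht
    induction t, ht using Nat.le_induction with
    | base =>
      rw [hV1, hVdag1, ← hsq₁, ← hsq₂]
      calc a₂ ^ 2 * a₁ ^ 2 * b ^ 2 ≤ 1 * (a₁ ^ 2 * b ^ 2) := by
            rw [mul_assoc]
            apply mul_le_mul_of_nonneg_right _ (by positivity)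
            calc a₂ ^ 2 ≤ 1 ^ 2 := by
                  apply pow_le_pow_left₀ ha₂0 (min_le_left _ _)
              _ = 1 := one_pow 2
        _ = (a₁ * b) ^ 2 := by ring
        _ ≤ bhat ^ 2 := pow_le_pow_left₀ (by positivity) ha₁b 2
    | succ n hn ih =>
      have h2 : n + 1 ≥ 2 := by omega
      rw [hVrec _ h2, hVdagrec _ h2]
      simp only [Nat.add_sub_cancel]
      have hγn := hγ _ h2
      have hγ0 : 0 ≤ γ (n + 1) := hγn.1
      have hγ1 : γ (n + 1) ≤ 1 := hγn.2
      have hrn := hr _ h2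
      have hS : 0 ≤ γ (n + 1) * b + (1 - γ (n + 1)) * c * r (n + 1) := by
        have : 0 ≤ 1 - γ (n + 1) := by linarith
        positivity
      have hstep : a₁ * a₂ * (γ (n + 1) * b + (1 - γ (n + 1)) * c * r (n + 1))
          ≤ γ (n + 1) * bhat + (1 - γ (n + 1)) * chat * r (n + 1) := by
        have h1γ : 0 ≤ 1 - γ (n + 1) := by linarith
        have e1 : a₁ * a₂ * b ≤ bhat := by
          calc a₁ * a₂ * b ≤ a₁ * 1 * b := by
                apply mul_le_mul_of_nonneg_right _ hb.le
                exact mul_le_mul_of_nonneg_left (min_le_left _ _) ha₁0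
            _ = a₁ * b := by ring
            _ ≤ bhat := ha₁b
        have e2 : a₁ * a₂ * c ≤ chat := by
          calc a₁ * a₂ * c ≤ 1 * a₂ * c := by
                apply mul_le_mul_of_nonneg_right _ hc.le
                exact mul_le_mul_of_nonneg_right (min_le_left _ _) ha₂0
            _ = a₂ * c := by ring
            _ ≤ chat := ha₂c
        have t1 : γ (n + 1) * (a₁ * a₂ * b) ≤ γ (n + 1) * bhat :=
          mul_le_mul_of_nonneg_left e1 hγ0
        have t2 : (1 - γ (n + 1)) * (a₁ * a₂ * c) * r (n + 1)
            ≤ (1 - γ (n + 1)) * chat * r (n + 1) :=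
          mul_le_mul_of_nonneg_right (mul_le_mul_of_nonneg_left e2 h1γ) hrn
        nlinarith [t1, t2]
      have hsqstep :
          (min 1 ((chat / c) ^ 2) * min 1 ((bhat / b) ^ 2)) *
            (γ (n + 1) * b + (1 - γ (n + 1)) * c * r (n + 1)) ^ 2
          ≤ (γ (n + 1) * bhat + (1 - γ (n + 1)) * chat * r (n + 1)) ^ 2 := by
        rw [← hsq₁, ← hsq₂]
        calc a₂ ^ 2 * a₁ ^ 2 *
              (γ (n + 1) * b + (1 - γ (n + 1)) * c * r (n + 1)) ^ 2
            = (a₁ * a₂ * (γ (n + 1) * b + (1 - γ (n + 1)) * c * r (n + 1))) ^ 2 := by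
              ring
          _ ≤ (γ (n + 1) * bhat + (1 - γ (n + 1)) * chat * r (n + 1)) ^ 2 := by
              apply pow_le_pow_left₀ (by positivity) hstep
      calc (min 1 ((chat / c) ^ 2) * min 1 ((bhat / b) ^ 2)) *
            ((γ (n + 1) * b + (1 - γ (n + 1)) * c * r (n + 1)) ^ 2 + V n)
          = (min 1 ((chat / c) ^ 2) * min 1 ((bhat / b) ^ 2)) *
              (γ (n + 1) * b + (1 - γ (n + 1)) * c * r (n + 1)) ^ 2 +
            (min 1 ((chat / c) ^ 2) * min 1 ((bhat / b) ^ 2)) * V n := by ring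
        _ ≤ (γ (n + 1) * bhat + (1 - γ (n + 1)) * chat * r (n + 1)) ^ 2 + Vdag n :=
            add_le_add hsqstep ih
  intro t ht
  rw [le_div_iff₀ hm0]
  calc V t * (min 1 ((chat / c) ^ 2) * min 1 ((bhat / b) ^ 2))
      = (min 1 ((chat / c) ^ 2) * min 1 ((bhat / b) ^ 2)) * V t := by ring
    _ ≤ Vdag t := key t ht
end

section
/- Let (A_i)_{i≥1} be a sequence of positive real numbers such that A_i / A_{i−1} → 1 as i → ∞ and there exists m > 0 with liminf_{i→∞} A_i ≥ m. Then R_n = (Σ_{i=1}^{n} A_i²) / (Σ_{i=1}^{n} A_i)² → 0 as n → ∞. -/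
open Filter Finset

/-- If `(A_i)` is a sequence of positive reals with `A_i / A_{i-1} → 1` and
`liminf A_i ≥ m > 0`, then `(Σ_{i=1}^n A_i²) / (Σ_{i=1}^n A_i)² → 0`. -/
theorem sum_sq_div_sq_sum_tendsto_zero (A : ℕ → ℝ)
    (hpos : ∀ i ≥ 1, 0 < A i)
    (hratio : Tendsto (fun i => A i / A (i - 1)) atTop (nhds 1))
    (m : ℝ) (hm : 0 < m) (hliminf : m ≤ Filter.liminf A atTop) :
    Tendsto (fun n => (∑ i ∈ Finset.Icc 1 n, A i ^ 2) / (∑ i ∈ Finset.Icc 1 n, A i) ^ 2)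
      atTop (nhds 0) := by
  classical
  set S : ℕ → ℝ := fun n => ∑ i ∈ Finset.Icc 1 n, A i with hSdef
  set B : ℕ → ℝ := fun i => if 1 ≤ i then A i else 0 with hBdef
  have hBnn : ∀ i, 0 ≤ B i := by
    intro i
    simp only [hBdef]
    split
    · exact (hpos i ‹_›).le
    · exact le_rfl
  have hsum_eq : ∀ (f : ℕ → ℝ), f 0 = 0 → ∀ n,
      ∑ i ∈ Finset.range (n+1), f i = ∑ i ∈ Finset.Icc 1 n, f i := by
    intro f hf n
    have hsub : Finset.Icc 1 n ⊆ Finset.range (n+1) := by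
      intro x hx
      rw [Finset.mem_Icc] at hx
      rw [Finset.mem_range]
      omega
    rw [Finset.sum_subset hsub]
    intro x hx hx'
    rw [Finset.mem_range] at hx
    rw [Finset.mem_Icc] at hx'
    have : x = 0 := by omega
    rw [this, hf]
  have hSB : ∀ n, S n = ∑ i ∈ Finset.range (n+1), B i := by
    intro n
    rw [hsum_eq B (by simp [hBdef]) n]
    exact Finset.sum_congr rfl fun i hi => by
      simp [hBdef, (Finset.mem_Icc.mp hi).1]
  have hSnn : ∀ n, 0 ≤ S n := fun n =>
    Finset.sum_nonneg fun i hi => (hpos i (Finset.mem_Icc.mp hi).1).le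
  have hSmono : Monotone S := fun a b hab =>
    Finset.sum_le_sum_of_subset_of_nonneg (Finset.Icc_subset_Icc_right hab)
      (fun i hi _ => (hpos i (Finset.mem_Icc.mp hi).1).le)
  have hS1 : ∀ n, 1 ≤ n → A 1 ≤ S n := by
    intro n hn
    exact Finset.single_le_sum (f := A)
      (fun i hi => (hpos i (Finset.mem_Icc.mp hi).1).le)
      (Finset.mem_Icc.mpr ⟨le_rfl, hn⟩)
  have hSpos : ∀ n, 1 ≤ n → 0 < S n := fun n hn =>
    lt_of_lt_of_le (hpos 1 le_rfl) (hS1 n hn)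
  -- A is eventually ≥ m/2
  have hm2 : ∀ᶠ i in atTop, m / 2 < A i := by
    exact Filter.eventually_lt_of_lt_liminf (lt_of_lt_of_le (by linarith) hliminf)
      (isBoundedUnder_of_eventually_ge
        ((eventually_ge_atTop 1).mono fun i hi => (hpos i hi).le))
  -- B is not summable
  have hnotsum : ¬ Summable B := by
    intro hsum
    have h0 := hsum.tendsto_atTop_zero
    have h1 : ∀ᶠ i in atTop, B i < m / 2 :=
      h0.eventually_lt_const (by linarith)
    have h2 : ∀ᶠ i in atTop, m / 2 < B i := by
      filter_upwards [hm2, eventually_ge_atTop 1] with i h1 h2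
      simpa [hBdef, h2] using h1
    obtain ⟨i, hi1, hi2⟩ := (h1.and h2).exists
    linarith
  have hBtop : Tendsto (fun n => ∑ i ∈ Finset.range n, B i) atTop atTop :=
    (not_summable_iff_tendsto_nat_atTop_of_nonneg hBnn).mp hnotsum
  have hStop : Tendsto S atTop atTop := by
    have := hBtop.comp (tendsto_add_atTop_nat 1)
    exact this.congr fun n => (hSB n).symm
  -- A n / S n → 0
  have hAS : Tendsto (fun n => A n / S n) atTop (nhds 0) := by
    rw [NormedAddCommGroup.tendsto_nhds_zero]
    intro ε hε
    obtain ⟨k, hk⟩ := exists_nat_gt (3 / ε)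
    have hk0 : 0 < k := by
      have h3 : (0:ℝ) < k := lt_trans (by positivity) hk
      exact_mod_cast h3
    have hkε : 3 / (k : ℝ) < ε := by
      rw [div_lt_iff₀ (by exact_mod_cast hk0)]
      rw [div_lt_iff₀ hε] at hk
      linarith [hk]
    set δ : ℝ := 1 / k with hδdef
    have hδ : 0 < δ := by positivity
    have hexp : (1 + δ) ^ k ≤ 3 := by
      have h1 : 1 + δ ≤ Real.exp δ := by linarith [Real.add_one_le_exp δ]
      calc (1 + δ) ^ k ≤ (Real.exp δ) ^ k := by
            apply pow_le_pow_left₀ (by linarith) h1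
        _ = Real.exp (δ * k) := by rw [← Real.exp_nat_mul]; ring_nf
        _ = Real.exp 1 := by
            rw [hδdef]
            congr 1
            field_simp
        _ ≤ 3 := by linarith [Real.exp_one_lt_d9]
    obtain ⟨N₀, hN₀⟩ := eventually_atTop.mp
      (hratio.eventually_lt_const (by linarith : (1:ℝ) < 1 + δ))
    set N := max N₀ 2 with hNdef
    have hN : ∀ i, N ≤ i → A i / A (i - 1) < 1 + δ := fun i hi =>
      hN₀ i (le_trans (le_max_left _ _) hi)
    filter_upwards [eventually_ge_atTop (N + k)] with n hn
    have hN2 : 2 ≤ N := le_max_right _ _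
    have key : ∀ j, j ≤ k → A n ≤ (1 + δ) ^ j * A (n - j) := by
      intro j
      induction j with
      | zero => intro _; simp
      | succ j ih =>
        intro hj
        have hj' := ih (Nat.le_of_succ_le hj)
        have hnj : N ≤ n - j := by omega
        have hApos : 0 < A (n - j - 1) := hpos _ (by omega)
        have hr := hN (n - j) hnj
        have h2 : A (n - j) ≤ (1 + δ) * A (n - j - 1) := by
          rw [div_lt_iff₀ hApos] at hr
          linarith
        have h3 : n - (j + 1) = n - j - 1 := by omega
        calc A n ≤ (1 + δ) ^ j * A (n - j) := hj'
          _ ≤ (1 + δ) ^ j * ((1 + δ) * A (n - j - 1)) := by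
              apply mul_le_mul_of_nonneg_left h2 (by positivity)
          _ = (1 + δ) ^ (j + 1) * A (n - (j + 1)) := by rw [h3]; ring
    have hterm : ∀ i ∈ Finset.Icc (n - k + 1) n, A n / 3 ≤ A i := by
      intro i hi
      obtain ⟨hi1, hi2⟩ := Finset.mem_Icc.mp hi
      have hj : n - i ≤ k := by omega
      have hkey := key (n - i) hj
      have hni : n - (n - i) = i := by omega
      rw [hni] at hkey
      have hpow : (1 + δ) ^ (n - i) ≤ 3 := by
        calc (1 + δ) ^ (n - i) ≤ (1 + δ) ^ k :=
              pow_le_pow_right₀ (by linarith) hj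
          _ ≤ 3 := hexp
      have hApos : 0 < A i := hpos i (by omega)
      rw [div_le_iff₀ (by norm_num : (0:ℝ) < 3)]
      calc A n ≤ (1 + δ) ^ (n - i) * A i := hkey
        _ ≤ 3 * A i := mul_le_mul_of_nonneg_right hpow hApos.le
        _ = A i * 3 := by ring
    have hcard : (Finset.Icc (n - k + 1) n).card = k := by
      rw [Nat.card_Icc]
      omega
    have hsum1 : (k : ℝ) * (A n / 3) ≤ ∑ i ∈ Finset.Icc (n - k + 1) n, A i := by
      calc (k : ℝ) * (A n / 3) = ∑ _i ∈ Finset.Icc (n - k + 1) n, A n / 3 := by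
            rw [Finset.sum_const, hcard, nsmul_eq_mul]
        _ ≤ ∑ i ∈ Finset.Icc (n - k + 1) n, A i := Finset.sum_le_sum hterm
    have hsub : Finset.Icc (n - k + 1) n ⊆ Finset.Icc 1 n :=
      Finset.Icc_subset_Icc_left (by omega)
    have hsum2 : ∑ i ∈ Finset.Icc (n - k + 1) n, A i ≤ S n :=
      Finset.sum_le_sum_of_subset_of_nonneg hsub
        fun i hi _ => (hpos i (Finset.mem_Icc.mp hi).1).le
    have hSn : 0 < S n := hSpos n (by omega)
    have hAn : 0 < A n := hpos n (by omega)
    have hstep : (k : ℝ) * (A n / 3) ≤ S n := le_trans hsum1 hsum2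
    have : A n / S n ≤ 3 / k := by
      rw [div_le_div_iff₀ hSn (by exact_mod_cast hk0)]
      nlinarith [hstep]
    rw [Real.norm_eq_abs, abs_of_nonneg (by positivity)]
    exact lt_of_le_of_lt this hkε
  -- little-o setup
  have hlittle : (fun i => B i ^ 2) =o[atTop] fun i => B i * S i := by
    rw [Asymptotics.isLittleO_iff_tendsto']
    · have : Tendsto (fun i => A i / S i) atTop (nhds 0) := hAS
      apply this.congr'
      filter_upwards [eventually_ge_atTop 1] with i hi
      have hBi : B i = A i := by simp [hBdef, hi]
      have hSi : S i ≠ 0 := (hSpos i hi).ne'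
      have hAi : A i ≠ 0 := (hpos i hi).ne'
      rw [hBi]
      field_simp
    · filter_upwards [eventually_ge_atTop 1] with i hi
      intro h
      exfalso
      have hBi : B i = A i := by simp [hBdef, hi]
      rw [hBi] at h
      exact (mul_pos (hpos i hi) (hSpos i hi)).ne' h
  have hgtop : Tendsto (fun n => ∑ i ∈ Finset.range n, B i * S i) atTop atTop := by
    apply tendsto_atTop_mono _ (hBtop.const_mul_atTop (hpos 1 le_rfl))
    intro n
    rw [Finset.mul_sum]
    apply Finset.sum_le_sum
    intro i _
    rcases Nat.eq_zero_or_pos i with rfl | hi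
    · simp [hBdef]
    · have hi' : 1 ≤ i := hi
      have hBi : B i = A i := by
        simp only [hBdef]
        rw [if_pos hi']
      rw [hBi, mul_comm]
      exact mul_le_mul_of_nonneg_left (hS1 i hi) (hpos i hi).le
  have hsum_o := hlittle.sum_range (fun i => mul_nonneg (hBnn i) (hSnn i)) hgtop
  -- conclude
  rw [NormedAddCommGroup.tendsto_nhds_zero]
  intro ε hε
  have hε2 : 0 < ε / 2 := by linarith
  have hev := (tendsto_add_atTop_nat 1).eventually (Asymptotics.isLittleO_iff.mp hsum_o hε2)
  filter_upwards [hev, eventually_ge_atTop 1] with n hn hn1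
  have hBsq0 : (fun i => B i ^ 2) 0 = 0 := by simp [hBdef]
  have hBS0 : (fun i => B i * S i) 0 = 0 := by simp [hBdef]
  have e1 : ∑ i ∈ Finset.range (n+1), B i ^ 2 = ∑ i ∈ Finset.Icc 1 n, A i ^ 2 := by
    rw [hsum_eq _ hBsq0 n]
    exact Finset.sum_congr rfl fun i hi => by
      simp [hBdef, (Finset.mem_Icc.mp hi).1]
  have e2 : ∑ i ∈ Finset.range (n+1), B i * S i = ∑ i ∈ Finset.Icc 1 n, A i * S i := by
    rw [hsum_eq _ hBS0 n]
    exact Finset.sum_congr rfl fun i hi => by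
      simp [hBdef, (Finset.mem_Icc.mp hi).1]
  have e3 : ∑ i ∈ Finset.Icc 1 n, A i * S i ≤ S n ^ 2 := by
    have : ∑ i ∈ Finset.Icc 1 n, A i * S i ≤ ∑ i ∈ Finset.Icc 1 n, A i * S n := by
      apply Finset.sum_le_sum
      intro i hi
      exact mul_le_mul_of_nonneg_left (hSmono (Finset.mem_Icc.mp hi).2)
        (hpos i (Finset.mem_Icc.mp hi).1).le
    rw [← Finset.sum_mul] at this
    calc ∑ i ∈ Finset.Icc 1 n, A i * S i ≤ S n * S n := this
      _ = S n ^ 2 := (sq (S n)).symm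
  have hSn : 0 < S n := hSpos n hn1
  have hnum_nn : 0 ≤ ∑ i ∈ Finset.Icc 1 n, A i ^ 2 :=
    Finset.sum_nonneg fun i hi => sq_nonneg _
  have hgnn : 0 ≤ ∑ i ∈ Finset.range (n+1), B i * S i :=
    Finset.sum_nonneg fun i _ => mul_nonneg (hBnn i) (hSnn i)
  rw [e1] at hn
  rw [Real.norm_eq_abs, abs_of_nonneg hnum_nn] at hn
  rw [Real.norm_eq_abs, abs_of_nonneg hgnn] at hn
  rw [e2] at hn
  have hbound : ∑ i ∈ Finset.Icc 1 n, A i ^ 2 ≤ ε / 2 * S n ^ 2 := by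
    calc ∑ i ∈ Finset.Icc 1 n, A i ^ 2 ≤ ε / 2 * ∑ i ∈ Finset.Icc 1 n, A i * S i := hn
      _ ≤ ε / 2 * S n ^ 2 := by
          apply mul_le_mul_of_nonneg_left e3 hε2.le
  rw [Real.norm_eq_abs, abs_of_nonneg (by positivity)]
  rw [div_lt_iff₀ (by positivity)]
  calc ∑ i ∈ Finset.Icc 1 n, A i ^ 2 ≤ ε / 2 * S n ^ 2 := hbound
    _ < ε * S n ^ 2 := by nlinarith [pow_pos hSn 2]
end

section
/- Let (A_n)_{n≥1} be a sequence of positive real numbers such that A_{n−1}/A_n → 1 as n → ∞. Then (Σ_{i=1}^{n} A_i) / A_n → ∞ as n → ∞. -/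
/-!
For each fixed `j`, the quotient `A (n - j) / A n` is a product of `j` consecutive ratios and so
tends to `1`. Hence the last `m` terms alone contribute `∑_{j < m} A (n - j) / A n → m` to
`(∑_{i=1}^n A i) / A n`, and `m` is arbitrary.
-/

open Filter Topology Finset

theorem tendsto_div_sub_of_tendsto_div_pred {K : Type*} [NormedField K] {A : ℕ → K}
    (hA : ∀ᶠ n in atTop, A n ≠ 0)
    (hratio : Tendsto (fun n => A (n - 1) / A n) atTop (𝓝 1)) (j : ℕ) :
    Tendsto (fun n => A (n - j) / A n) atTop (𝓝 1) := by
  induction j with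
  | zero =>
    exact tendsto_const_nhds.congr' (by filter_upwards [hA] with n hn using (div_self hn).symm)
  | succ j ih =>
    have hshift := hratio.comp (tendsto_sub_atTop_nat j)
    have hA' := (tendsto_sub_atTop_nat j).eventually hA
    simpa using (hshift.mul ih).congr' (by
      filter_upwards [hA'] with n hn
      simp only [Function.comp_apply, Nat.sub_sub]
      exact div_mul_div_cancel₀ hn)

theorem sum_range_sub_le_sum_Icc {M : Type*} [AddCommMonoid M] [PartialOrder M]
    [IsOrderedAddMonoid M] {A : ℕ → M} (hA : ∀ n ≥ 1, 0 ≤ A n) {m n : ℕ} (hmn : m ≤ n) :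
    ∑ j ∈ range m, A (n - j) ≤ ∑ i ∈ Icc 1 n, A i := by
  rw [← sum_image (g := (n - ·)) fun i hi j hj h => by simp at hi hj h; omega]
  exact sum_le_sum_of_subset_of_nonneg (fun i hi => by simp at hi ⊢; omega)
    fun i hi _ => hA i (mem_Icc.1 hi).1

/-- If `(A_n)` is a sequence of positive reals with `A_{n-1} / A_n → 1`, then
`(Σ_{i=1}^n A_i) / A_n → ∞`. -/
theorem sum_div_last_tendsto_atTop (A : ℕ → ℝ)
    (hpos : ∀ n ≥ 1, 0 < A n)
    (hratio : Tendsto (fun n => A (n - 1) / A n) atTop (nhds 1)) :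
    Tendsto (fun n => (∑ i ∈ Finset.Icc 1 n, A i) / A n) atTop atTop := by
  have hA : ∀ᶠ n in atTop, 0 < A n := eventually_atTop.2 ⟨1, hpos⟩
  refine tendsto_atTop.2 fun b => ?_
  obtain ⟨m, hbm⟩ := exists_nat_gt b
  have htail : Tendsto (fun n => ∑ j ∈ range m, A (n - j) / A n) atTop (𝓝 m) := by
    simpa using tendsto_finsetSum (range m) fun j _ =>
      tendsto_div_sub_of_tendsto_div_pred (hA.mono fun n hn => hn.ne') hratio j
  filter_upwards [htail.eventually_const_le hbm, hA, eventually_ge_atTop m] with n hb hAn hmn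
  calc b ≤ ∑ j ∈ range m, A (n - j) / A n := hb
    _ = (∑ j ∈ range m, A (n - j)) / A n := (sum_div ..).symm
    _ ≤ (∑ i ∈ Icc 1 n, A i) / A n := by
      gcongr
      exact sum_range_sub_le_sum_Icc (fun i hi => (hpos i hi).le) hmn
end

section
/- Fix real numbers b and ε with 0 < ε < b, and define f : [0,∞) → [0,∞) by f(x) = b²·x / (x + (b−ε)²). Then: (1) f is strictly increasing on [0,∞); (2) the fixed points of f in [0,∞) are exactly 0 and ε(2b−ε); (3) x < f(x) for all x ∈ (0, ε(2b−ε)) and f(x) < x for all x > ε(2b−ε); and (4) for every starting point W_0 > 0, the iterates W_n = f(W_{n−1}) converge to ε(2b−ε) as n → ∞. -/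
open Filter Set

/-- Fixed-point analysis of the map `f(x) = b²x/(x + (b-ε)²)` for `0 < ε < b`:
it is strictly increasing on `[0,∞)`, its fixed points in `[0,∞)` are exactly
`0` and `ε(2b-ε)`, `x < f(x)` on `(0, ε(2b-ε))` and `f(x) < x` above `ε(2b-ε)`,
and from every starting point `W₀ > 0` the iterates converge to `ε(2b-ε)`. -/
theorem oeuvre_fixed_point (b ε : ℝ) (hε : 0 < ε) (hεb : ε < b)
    (f : ℝ → ℝ) (hf : ∀ x, f x = b ^ 2 * x / (x + (b - ε) ^ 2)) :
    StrictMonoOn f (Ici 0) ∧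
    (∀ x ≥ (0 : ℝ), (f x = x ↔ x = 0 ∨ x = ε * (2 * b - ε))) ∧
    (∀ x, 0 < x → x < ε * (2 * b - ε) → x < f x) ∧
    (∀ x, ε * (2 * b - ε) < x → f x < x) ∧
    (∀ W0 : ℝ, 0 < W0 →
      Tendsto (fun n => f^[n] W0) atTop (nhds (ε * (2 * b - ε)))) := by
  set c := (b - ε) ^ 2 with hc
  set L := ε * (2 * b - ε) with hLdef
  have hbε : 0 < b - ε := by linarith
  have hc0 : 0 < c := by positivity
  have hL0 : 0 < L := by rw [hLdef]; nlinarith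
  have hbc : b ^ 2 = L + c := by rw [hLdef, hc]; ring
  refine ⟨?_, ?_, ?_, ?_, ?_⟩
  · intro x hx y hy hxy
    rw [hf, hf]
    rw [div_lt_div_iff₀ (by simp at hx; nlinarith) (by simp at hy; nlinarith)]
    simp only [mem_Ici] at hx hy
    nlinarith [mul_pos (mul_pos (pow_pos (lt_trans hε hεb) 2) hc0) (sub_pos.mpr hxy)]
  · intro x hx
    have hxc : 0 < x + c := by nlinarith
    rw [hf, div_eq_iff hxc.ne']
    constructor
    · intro h
      rcases eq_or_lt_of_le hx with h0 | h0
      · exact Or.inl h0.symm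
      · right; rw [hLdef]; nlinarith
    · rintro (rfl | h)
      · ring
      · rw [h, hLdef]; ring
  · intro x hx hxL
    rw [hf, lt_div_iff₀ (by nlinarith)]
    nlinarith
  · intro x hx
    have hx0 : 0 < x := lt_trans hL0 hx
    rw [hf, div_lt_iff₀ (by nlinarith)]
    nlinarith
  · intro W0 hW0
    set m := min W0 L with hm
    have hm0 : 0 < m := lt_min hW0 hL0
    have hmL : m ≤ L := min_le_right _ _
    -- f maps [m, ∞) into itself
    have step : ∀ x, m ≤ x → m ≤ f x := by
      intro x hx
      have hx0 : 0 < x := lt_of_lt_of_le hm0 hx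
      have hxc : 0 < x + c := by nlinarith
      rw [hf, le_div_iff₀ hxc]
      rcases le_total x L with h | h
      · nlinarith
      · nlinarith
    have hlow : ∀ n, m ≤ f^[n] W0 := by
      intro n
      induction n with
      | zero => exact min_le_left W0 L
      | succ n ih => rw [Function.iterate_succ_apply']; exact step _ ih
    set r := c / (m + c) with hr
    have hmc : 0 < m + c := by positivity
    have hr0 : 0 ≤ r := by positivity
    have hr1 : r < 1 := by rw [hr, div_lt_one hmc]; linarith
    have hcontr : ∀ x, m ≤ x → |f x - L| ≤ r * |x - L| := by
      intro x hx
      have hx0 : 0 < x := lt_of_lt_of_le hm0 hx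
      have hxc : 0 < x + c := by nlinarith
      have hfx : f x - L = c * (x - L) / (x + c) := by
        rw [hf]; field_simp; nlinarith [hbc]
      rw [hfx, abs_div, abs_of_pos hxc, abs_mul, abs_of_pos hc0, hr,
        div_mul_eq_mul_div]
      gcongr
    have hbound : ∀ n, |f^[n] W0 - L| ≤ r ^ n * |W0 - L| := by
      intro n
      induction n with
      | zero => simp
      | succ n ih =>
        rw [Function.iterate_succ_apply', pow_succ]
        calc |f (f^[n] W0) - L| ≤ r * |f^[n] W0 - L| := hcontr _ (hlow n)
          _ ≤ r * (r ^ n * |W0 - L|) := by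
              exact mul_le_mul_of_nonneg_left ih hr0
          _ = r ^ n * r * |W0 - L| := by ring
    have htend0 : Tendsto (fun n => r ^ n * |W0 - L|) atTop (nhds 0) := by
      have := tendsto_pow_atTop_nhds_zero_of_lt_one hr0 hr1
      simpa using this.mul_const |W0 - L|
    have habs : Tendsto (fun n => |f^[n] W0 - L|) atTop (nhds 0) :=
      squeeze_zero (fun n => abs_nonneg _) hbound htend0
    rw [tendsto_iff_dist_tendsto_zero]
    simpa [Real.dist_eq] using habs
end
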